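/- arXiv:2104.00833 — 6 statements merged into one kernel-verified Lean document; each statement's English description precedes it below -/
import Mathlib

section
/- For reals y_1, …, y_k > 0 such that y_i² ≠ y_j² for i ≠ j, the iterated integral over nested simplices ∫₀¹∫₀^{r_{k−1}} ⋯ ∫₀^{r₂} ∏_{j=1}^k sin((r_j − r_{j−1})·y_j) dr₁⋯dr_{k−1} (with r₀ = 0, r_k = 1) equals ∑_{j=1}^k sin(y_j) ∏_{i≠j} y_i/(y_i² − y_j²). -/
open MeasureTheory
open Real Finset



lemma conv_sin (a b t : ℝ) (hab : a^2 ≠ b^2) :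
    ∫ s in (0:ℝ)..t, Real.sin (a*s) * Real.sin ((t-s)*b)
      = (b * Real.sin (a*t) - a * Real.sin (b*t)) / (b^2 - a^2) := by
  have h1 : a + b ≠ 0 := by
    intro h
    apply hab
    have ha : a = -b := by linarith
    rw [ha]; ring
  have h2 : a - b ≠ 0 := by
    intro h
    apply hab
    have ha : a = b := by linarith
    rw [ha]
  have h3 : b^2 - a^2 ≠ 0 := sub_ne_zero.2 (Ne.symm hab)
  set F : ℝ → ℝ := fun s => (Real.sin ((a+b)*s - b*t)/(a+b) - Real.sin ((a-b)*s + b*t)/(a-b))/2 with hF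
  have key : ∀ s ∈ Set.uIcc (0:ℝ) t, HasDerivAt F (Real.sin (a*s) * Real.sin ((t-s)*b)) s := by
    intro s _
    have d1 : HasDerivAt (fun s : ℝ => (a+b)*s - b*t) (a+b) s := by
      simpa using ((hasDerivAt_id s).const_mul (a+b)).sub_const (b*t)
    have d2 : HasDerivAt (fun s : ℝ => (a-b)*s + b*t) (a-b) s := by
      simpa using ((hasDerivAt_id s).const_mul (a-b)).add_const (b*t)
    have D1 := (Real.hasDerivAt_sin ((a+b)*s - b*t)).comp s d1
    have D2 := (Real.hasDerivAt_sin ((a-b)*s + b*t)).comp s d2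
    have H := ((D1.div_const (a+b)).sub (D2.div_const (a-b))).div_const 2
    refine H.congr_deriv ?_
    rw [mul_div_assoc, mul_div_assoc, div_self h1, div_self h2, mul_one, mul_one,
      Real.cos_sub_cos]
    rw [show ((a+b)*s - b*t + ((a-b)*s + b*t))/2 = a*s by ring,
      show ((a+b)*s - b*t - ((a-b)*s + b*t))/2 = -((t-s)*b) by ring, Real.sin_neg]
    ring
  have hcont : IntervalIntegrable (fun s => Real.sin (a*s) * Real.sin ((t-s)*b)) volume 0 t := by
    apply Continuous.intervalIntegrable; fun_prop
  rw [intervalIntegral.integral_eq_sub_of_hasDerivAt key hcont]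
  simp only [hF]
  rw [show (a+b)*t - b*t = a*t by ring, show (a-b)*t + b*t = a*t by ring,
    show (a+b)*0 - b*t = -(b*t) by ring, show (a-b)*0 + b*t = b*t by ring, Real.sin_neg]
  field_simp
  ring

lemma lag_aux {m : ℕ} (a : Fin (m+1) → ℝ) (ha : Function.Injective a) (x : ℝ)
    (hx : ∀ i, a i ≠ x) :
    ∑ j, ((x - a j)⁻¹ * ∏ i ∈ Finset.univ.erase j, (a j - a i)⁻¹)
      = ∏ i, (x - a i)⁻¹ := by
  have hs := Lagrange.sum_basis (s := (Finset.univ : Finset (Fin (m+1)))) (v := a)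
    ha.injOn ⟨0, mem_univ 0⟩
  have hev : ∑ j, ∏ i ∈ Finset.univ.erase j, ((a j - a i)⁻¹ * (x - a i)) = 1 := by
    have := congrArg (Polynomial.eval x) hs
    simpa [Lagrange.basis, Lagrange.basisDivisor, Polynomial.eval_finset_sum, Polynomial.eval_prod] using this
  have hP : ∀ i, x - a i ≠ 0 := fun i => sub_ne_zero.2 (Ne.symm (hx i))
  rw [Finset.prod_inv_distrib]
  refine eq_inv_of_mul_eq_one_right ?_
  rw [Finset.mul_sum, ← hev]
  refine Finset.sum_congr rfl fun j _ => ?_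
  rw [← Finset.mul_prod_erase Finset.univ _ (mem_univ j), Finset.prod_mul_distrib]
  rw [show (x - a j) * (∏ i ∈ univ.erase j, (x - a i)) *
      ((x - a j)⁻¹ * ∏ i ∈ univ.erase j, (a j - a i)⁻¹)
    = ((x - a j)⁻¹ * (x - a j)) *
      ((∏ i ∈ univ.erase j, (a j - a i)⁻¹) * ∏ i ∈ univ.erase j, (x - a i)) by ring,
    inv_mul_cancel₀ (hP j), one_mul]

lemma lag_aux2 {m : ℕ} (a : Fin (m+1) → ℝ) (ha : Function.Injective a) (x : ℝ)
    (hx : ∀ i, a i ≠ x) :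
    ∑ j, ((a j - x)⁻¹ * ∏ i ∈ Finset.univ.erase j, (a i - a j)⁻¹)
      = ∏ i, (a i - x)⁻¹ := by
  have := lag_aux (fun i => -a i) (fun i j h => ha (by simpa using h)) (-x)
    (fun i => by simpa using hx i)
  simpa only [sub_neg_eq_add, neg_add_eq_sub] using this

def simplexSet (n : ℕ) (t : ℝ) : Set (Fin n → ℝ) :=
  {r | Monotone r ∧ (∀ i, 0 ≤ r i) ∧ (∀ i, r i ≤ t)}

noncomputable def itg (n : ℕ) (y : Fin (n+1) → ℝ) (t : ℝ) (r : Fin n → ℝ) : ℝ :=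
  ∏ j : Fin (n+1), Real.sin (((Fin.snoc (Fin.cons 0 r) t : Fin (n+2) → ℝ) j.succ
    - (Fin.snoc (Fin.cons 0 r) t : Fin (n+2) → ℝ) j.castSucc) * y j)

lemma isClosed_simplexSet (n : ℕ) (t : ℝ) : IsClosed (simplexSet n t) := by
  have : simplexSet n t =
      (⋂ (i : Fin n) (j : Fin n) (_ : i ≤ j), {r : Fin n → ℝ | r i ≤ r j}) ∩
      ((⋂ i, {r : Fin n → ℝ | 0 ≤ r i}) ∩ ⋂ i, {r : Fin n → ℝ | r i ≤ t}) := by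
    ext r
    simp only [simplexSet, Set.mem_setOf_eq, Set.mem_inter_iff, Set.mem_iInter, Monotone]
  rw [this]
  refine ((isClosed_iInter fun i => isClosed_iInter fun j => isClosed_iInter fun _ =>
    isClosed_le (continuous_apply i) (continuous_apply j))).inter
    (((isClosed_iInter fun i => isClosed_le continuous_const (continuous_apply i))).inter
    ((isClosed_iInter fun i => isClosed_le (continuous_apply i) continuous_const)))

lemma isCompact_simplexSet (n : ℕ) (t : ℝ) : IsCompact (simplexSet n t) := by
  refine IsCompact.of_isClosed_subset (isCompact_univ_pi fun i : Fin n =>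
    (isCompact_Icc (a := (0:ℝ)) (b := t))) (isClosed_simplexSet n t) ?_
  intro r hr
  simp only [Set.mem_univ_pi, Set.mem_Icc]
  exact fun i => ⟨hr.2.1 i, hr.2.2 i⟩

lemma measurableSet_simplexSet (n : ℕ) (t : ℝ) : MeasurableSet (simplexSet n t) :=
  (isClosed_simplexSet n t).measurableSet

lemma continuous_eval_snoc (n : ℕ) (t : ℝ) (k : Fin (n+2)) :
    Continuous (fun r : Fin n → ℝ => (Fin.snoc (Fin.cons 0 r) t : Fin (n+2) → ℝ) k) := by
  induction k using Fin.lastCases with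
  | last => simp only [Fin.snoc_last]; exact continuous_const
  | cast k =>
    simp only [Fin.snoc_castSucc]
    induction k using Fin.cases with
    | zero => simp only [Fin.cons_zero]; exact continuous_const
    | succ i => simp only [Fin.cons_succ]; exact continuous_apply i

lemma continuous_itg (n : ℕ) (y : Fin (n+1) → ℝ) (t : ℝ) : Continuous (itg n y t) := by
  unfold itg
  refine continuous_finset_prod _ fun j _ => Real.continuous_sin.comp ?_
  exact Continuous.mul (Continuous.sub (continuous_eval_snoc n t _)
    (continuous_eval_snoc n t _)) continuous_const

lemma mem_simplex_snoc {n : ℕ} {t s : ℝ} {r' : Fin n → ℝ} :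
    (Fin.snoc r' s : Fin (n+1) → ℝ) ∈ simplexSet (n+1) t ↔
      (0 ≤ s ∧ s ≤ t) ∧ r' ∈ simplexSet n s := by
  constructor
  · rintro ⟨hm, h0, ht⟩
    have hs0 : 0 ≤ s := by simpa using h0 (Fin.last n)
    have hst : s ≤ t := by simpa using ht (Fin.last n)
    refine ⟨⟨hs0, hst⟩, ?_, fun i => ?_, fun i => ?_⟩
    · intro i j hij
      have := hm (Fin.castSucc_le_castSucc_iff.2 hij)
      simpa using this
    · simpa using h0 i.castSucc
    · have := hm (Fin.castSucc_lt_last i).le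
      simpa using this
  · rintro ⟨⟨hs0, hst⟩, hm, h0, hs⟩
    refine ⟨?_, fun i => ?_, fun i => ?_⟩
    · intro i j hij
      induction j using Fin.lastCases with
      | last =>
        induction i using Fin.lastCases with
        | last => exact le_refl _
        | cast i => simpa using hs i
      | cast j =>
        have hij' : i ≤ j.castSucc := hij
        have hi : i ≠ Fin.last n := by
          rintro rfl
          exact (Fin.castSucc_lt_last j).not_ge hij'
        obtain ⟨i', rfl⟩ := Fin.exists_castSucc_eq.2 hi
        have : r' i' ≤ r' j := hm (Fin.castSucc_le_castSucc_iff.1 hij)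
        simpa using this
    · induction i using Fin.lastCases with
      | last => simpa using hs0
      | cast i => simpa using h0 i
    · induction i using Fin.lastCases with
      | last => simpa using hst
      | cast i => simpa using le_trans (hs i) hst

lemma itg_snoc (n : ℕ) (y : Fin (n+2) → ℝ) (t s : ℝ) (r' : Fin n → ℝ) :
    itg (n+1) y t (Fin.snoc r' s)
      = itg n (Fin.init y) s r' * Real.sin ((t - s) * y (Fin.last (n+1))) := by
  unfold itg
  rw [Fin.prod_univ_castSucc]
  congr 1
  · refine Finset.prod_congr rfl fun j _ => ?_
    rw [Fin.cons_snoc_eq_snoc_cons, Fin.succ_castSucc, Fin.snoc_castSucc, Fin.snoc_castSucc]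
    rfl
  · have h1 : (Fin.snoc (Fin.cons 0 (Fin.snoc r' s : Fin (n+1) → ℝ)) t : Fin (n+3) → ℝ)
        (Fin.last (n+1)).succ = t := by rw [Fin.succ_last, Fin.snoc_last]
    have h2 : (Fin.snoc (Fin.cons 0 (Fin.snoc r' s : Fin (n+1) → ℝ)) t : Fin (n+3) → ℝ)
        (Fin.last (n+1)).castSucc = s := by
      rw [Fin.snoc_castSucc, ← Fin.succ_last, Fin.cons_succ, Fin.snoc_last]
    rw [h1, h2]

lemma integrableOn_itg (n : ℕ) (y : Fin (n+1) → ℝ) (t : ℝ) :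
    IntegrableOn (itg n y t) (simplexSet n t) volume :=
  (continuous_itg n y t).continuousOn.integrableOn_compact (isCompact_simplexSet n t)

lemma recursion (n : ℕ) (y : Fin (n+2) → ℝ) (t : ℝ) :
    ∫ r in simplexSet (n+1) t, itg (n+1) y t r
      = ∫ s in Set.Icc (0:ℝ) t, Real.sin ((t-s) * y (Fin.last (n+1)))
          * ∫ r' in simplexSet n s, itg n (Fin.init y) s r' := by
  set e := MeasurableEquiv.piFinSuccAbove (fun _ : Fin (n+1) => ℝ) (Fin.last n) with he
  have hmp := MeasureTheory.volume_preserving_piFinSuccAbove (fun _ : Fin (n+1) => ℝ) (Fin.last n)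
  have hsymm : ∀ (s : ℝ) (r' : Fin n → ℝ), e.symm (s, r') = Fin.snoc r' s := by
    intro s r'
    simp [he, MeasurableEquiv.piFinSuccAbove, Fin.insertNthEquiv, Fin.insertNth_last']
  set F := (simplexSet (n+1) t).indicator (itg (n+1) y t) with hFdef
  have hmeas := measurableSet_simplexSet (n+1) t
  have hInt : Integrable F volume :=
    (integrable_indicator_iff hmeas).2 (integrableOn_itg (n+1) y t)
  have hInt2 : Integrable (F ∘ e.symm) (volume : Measure (ℝ × (Fin n → ℝ))) := by
    rw [(hmp.symm e).integrable_comp_emb e.symm.measurableEmbedding]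
    exact hInt
  have step1 : ∫ r in simplexSet (n+1) t, itg (n+1) y t r = ∫ r, F r := by
    rw [hFdef, integral_indicator hmeas]
  have step2 : ∫ r, F r = ∫ p : ℝ × (Fin n → ℝ), F (e.symm p) :=
    ((hmp.symm e).integral_comp e.symm.measurableEmbedding F).symm
  have step3 : ∫ p : ℝ × (Fin n → ℝ), F (e.symm p)
      = ∫ s : ℝ, ∫ r' : Fin n → ℝ, F (e.symm (s, r')) := by
    rw [show ∫ p : ℝ × (Fin n → ℝ), F (e.symm p) = ∫ p : ℝ × (Fin n → ℝ), (F ∘ e.symm) p from rfl,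
      Measure.volume_eq_prod]
    rw [Measure.volume_eq_prod] at hInt2
    exact MeasureTheory.integral_prod _ hInt2
  have inner : ∀ s : ℝ, (∫ r' : Fin n → ℝ, F (e.symm (s, r')))
      = Set.indicator (Set.Icc (0:ℝ) t)
          (fun s => Real.sin ((t-s) * y (Fin.last (n+1)))
            * ∫ r' in simplexSet n s, itg n (Fin.init y) s r') s := by
    intro s
    by_cases hs : s ∈ Set.Icc (0:ℝ) t
    · rw [Set.indicator_of_mem hs]
      obtain ⟨hs0, hst⟩ := hs
      have hptwise : ∀ r' : Fin n → ℝ, F (e.symm (s, r'))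
          = (simplexSet n s).indicator
              (fun r' => itg n (Fin.init y) s r' * Real.sin ((t-s) * y (Fin.last (n+1)))) r' := by
        intro r'
        rw [hsymm, hFdef]
        by_cases hr : r' ∈ simplexSet n s
        · rw [Set.indicator_of_mem hr,
            Set.indicator_of_mem (mem_simplex_snoc.2 ⟨⟨hs0, hst⟩, hr⟩), itg_snoc]
        · rw [Set.indicator_of_notMem hr, Set.indicator_of_notMem
            (fun h => hr (mem_simplex_snoc.1 h).2)]
      simp_rw [hptwise]
      rw [integral_indicator (measurableSet_simplexSet n s), integral_mul_const, mul_comm]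
    · rw [Set.indicator_of_notMem hs]
      have hptwise : ∀ r' : Fin n → ℝ, F (e.symm (s, r')) = 0 := by
        intro r'
        rw [hsymm, hFdef]
        apply Set.indicator_of_notMem
        intro h
        rw [Set.mem_Icc] at hs
        exact hs ⟨(mem_simplex_snoc.1 h).1.1, (mem_simplex_snoc.1 h).1.2⟩
      simp_rw [hptwise]
      exact integral_zero _ _
  rw [step1, step2, step3]
  simp_rw [inner]
  rw [integral_indicator measurableSet_Icc]

lemma prod_erase_ite {m : ℕ} (J : Fin m) (f : Fin m → ℝ) :
    ∏ i ∈ Finset.univ.erase J, f i = ∏ i, (if i = J then 1 else f i) := by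
  rw [← Finset.mul_prod_erase Finset.univ _ (Finset.mem_univ J), if_pos rfl, one_mul]
  exact (Finset.prod_congr rfl fun i hi => (if_neg (Finset.mem_erase.1 hi).1)).symm

lemma prod_erase_castSucc {n : ℕ} (j : Fin (n+1)) (f : Fin (n+2) → ℝ) :
    ∏ i ∈ Finset.univ.erase (Fin.castSucc j), f i
      = (∏ i ∈ Finset.univ.erase j, f (Fin.castSucc i)) * f (Fin.last (n+1)) := by
  rw [prod_erase_ite, Fin.prod_univ_castSucc, prod_erase_ite,
    if_neg (Fin.castSucc_lt_last j).ne']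
  congr 1
  exact Finset.prod_congr rfl fun i _ => by simp only [Fin.castSucc_inj]

lemma prod_erase_last {n : ℕ} (f : Fin (n+2) → ℝ) :
    ∏ i ∈ Finset.univ.erase (Fin.last (n+1)), f i = ∏ i : Fin (n+1), f (Fin.castSucc i) := by
  rw [prod_erase_ite, Fin.prod_univ_castSucc, if_pos rfl, mul_one]
  exact Finset.prod_congr rfl fun i _ => if_neg (Fin.castSucc_lt_last i).ne

lemma mainJ (n : ℕ) : ∀ (y : Fin (n+1) → ℝ), (∀ j, 0 < y j) →
    (∀ i j, i ≠ j → (y i)^2 ≠ (y j)^2) → ∀ t : ℝ, 0 ≤ t →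
    (∫ r in simplexSet n t, itg n y t r)
      = ∑ j, Real.sin (y j * t) * ∏ i ∈ Finset.univ.erase j, (y i / ((y i)^2 - (y j)^2)) := by
  induction n with
  | zero =>
    intro y hy hsq t ht
    have hset : simplexSet 0 t = Set.univ := by
      ext r
      simp only [simplexSet, Set.mem_setOf_eq, Set.mem_univ, iff_true]
      exact ⟨fun i => i.elim0, fun i => i.elim0, fun i => i.elim0⟩
    rw [hset, MeasureTheory.setIntegral_univ, MeasureTheory.integral_unique]
    have huniv : (volume : Measure (Fin 0 → ℝ)) Set.univ = 1 := by
      rw [MeasureTheory.volume_pi, MeasureTheory.Measure.pi_univ]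
      simp
    rw [measureReal_def, huniv]
    simp only [ENNReal.toReal_one, one_smul]
    rw [Fin.sum_univ_one]
    have : (Finset.univ.erase (0 : Fin 1)) = ∅ := rfl
    rw [this, Finset.prod_empty, mul_one]
    unfold itg
    rw [Fin.prod_univ_one]
    have e1 : ((0 : Fin 1).succ : Fin 2) = Fin.last 1 := rfl
    have e2 : ((0 : Fin 1).castSucc : Fin 2) = Fin.castSucc (0 : Fin 1) := rfl
    rw [e1, e2, Fin.snoc_last, Fin.snoc_castSucc, Fin.cons_zero, sub_zero, mul_comm]
  | succ n IH =>
    intro y hy hsq t ht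
    set z : Fin (n+1) → ℝ := Fin.init y with hz
    set b : ℝ := y (Fin.last (n+1)) with hb
    have hzpos : ∀ j, 0 < z j := fun j => hy _
    have hzsq : ∀ i j, i ≠ j → (z i)^2 ≠ (z j)^2 := fun i j hij =>
      hsq _ _ (fun h => hij (Fin.castSucc_inj.1 h))
    have hzb : ∀ j, (z j)^2 ≠ b^2 := fun j => hsq _ _ (Fin.castSucc_lt_last j).ne
    set c : Fin (n+1) → ℝ := fun j => ∏ i ∈ Finset.univ.erase j, (z i / ((z i)^2 - (z j)^2))
      with hc
    rw [recursion n y t]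
    have hcong : Set.EqOn
        (fun s => Real.sin ((t-s) * y (Fin.last (n+1)))
          * ∫ r' in simplexSet n s, itg n (Fin.init y) s r')
        (fun s => ∑ j, c j * (Real.sin (z j * s) * Real.sin ((t-s)*b)))
        (Set.Icc (0:ℝ) t) := by
      intro s hs
      simp only
      rw [IH z hzpos hzsq s hs.1, Finset.mul_sum]
      exact Finset.sum_congr rfl fun j _ => by ring
    rw [MeasureTheory.setIntegral_congr_fun measurableSet_Icc hcong,
      MeasureTheory.integral_Icc_eq_integral_Ioc, ← intervalIntegral.integral_of_le ht]
    have hval : (∫ s in (0:ℝ)..t, ∑ j, c j * (Real.sin (z j * s) * Real.sin ((t-s)*b)))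
        = ∑ j, c j * ((b * Real.sin (z j * t) - z j * Real.sin (b * t)) / (b^2 - (z j)^2)) := by
      rw [intervalIntegral.integral_finset_sum
        (fun j _ => by apply Continuous.intervalIntegrable; fun_prop)]
      refine Finset.sum_congr rfl fun j _ => ?_
      rw [intervalIntegral.integral_const_mul, conv_sin (z j) b t (hzb j)]
    rw [hval]
    conv_rhs => rw [Fin.sum_univ_castSucc]
    have hcsplit : ∀ j, c j = (∏ i ∈ Finset.univ.erase j, z i)
        * ∏ i ∈ Finset.univ.erase j, ((z i)^2 - (z j)^2)⁻¹ := by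
      intro j
      rw [hc, ← Finset.prod_mul_distrib]
      exact Finset.prod_congr rfl fun i _ => div_eq_mul_inv _ _
    have hC1 : ∀ j : Fin (n+1),
        (∏ i ∈ Finset.univ.erase (Fin.castSucc j), (y i / ((y i)^2 - (y (Fin.castSucc j))^2)))
          = c j * (b / (b^2 - (z j)^2)) := by
      intro j
      rw [prod_erase_castSucc]
      rfl
    have hC2 : (∏ i ∈ Finset.univ.erase (Fin.last (n+1)),
          (y i / ((y i)^2 - (y (Fin.last (n+1)))^2)))
        = ∏ i : Fin (n+1), (z i / ((z i)^2 - b^2)) := prod_erase_last _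
    have hlag : ∑ j, c j * (z j / ((z j)^2 - b^2)) = ∏ i, (z i / ((z i)^2 - b^2)) := by
      have ha : Function.Injective (fun i => (z i)^2) := by
        intro i j h
        by_contra hij
        exact hzsq i j hij h
      have hlg := lag_aux2 (fun i => (z i)^2) ha (b^2) hzb
      calc ∑ j, c j * (z j / ((z j)^2 - b^2))
          = ∑ j, (∏ i, z i)
            * (((z j)^2 - b^2)⁻¹ * ∏ i ∈ Finset.univ.erase j, ((z i)^2 - (z j)^2)⁻¹) := by
            refine Finset.sum_congr rfl fun j _ => ?_
            rw [hcsplit j, div_eq_mul_inv,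
              ← Finset.mul_prod_erase Finset.univ z (Finset.mem_univ j)]
            ring
        _ = (∏ i, z i)
            * ∑ j, (((z j)^2 - b^2)⁻¹ * ∏ i ∈ Finset.univ.erase j, ((z i)^2 - (z j)^2)⁻¹) := by
            rw [Finset.mul_sum]
        _ = (∏ i, z i) * ∏ i, (((z i)^2 - b^2)⁻¹) := by rw [hlg]
        _ = ∏ i, (z i / ((z i)^2 - b^2)) := by
            rw [← Finset.prod_mul_distrib]
            exact Finset.prod_congr rfl fun i _ => (div_eq_mul_inv _ _).symm
    have hsplit : ∀ j, c j * ((b * Real.sin (z j * t) - z j * Real.sin (b*t)) / (b^2 - (z j)^2))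
        = Real.sin (z j * t) * (c j * (b / (b^2 - (z j)^2)))
          + Real.sin (b * t) * (c j * (z j / ((z j)^2 - b^2))) := by
      intro j
      have h1 : (z j)^2 - b^2 ≠ 0 := sub_ne_zero.2 (hzb j)
      have h2 : b^2 - (z j)^2 ≠ 0 := sub_ne_zero.2 (Ne.symm (hzb j))
      field_simp
      ring
    simp_rw [hsplit]
    rw [Finset.sum_add_distrib, ← Finset.mul_sum, hlag]
    congr 1
    · exact Finset.sum_congr rfl fun j _ => by rw [hC1 j]; rfl
    · rw [hC2]

theorem iterated_sin_integral (n : ℕ) (hn : 1 ≤ n) (y : Fin (n+1) → ℝ)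
    (hy : ∀ j, 0 < y j) (hsq : ∀ i j, i ≠ j → (y i)^2 ≠ (y j)^2) :
    (∫ r in {r : Fin n → ℝ | Monotone r ∧ (∀ i, 0 ≤ r i) ∧ (∀ i, r i ≤ 1)},
        ∏ j : Fin (n+1), Real.sin (((Fin.snoc (Fin.cons 0 r) 1 : Fin (n+2) → ℝ) j.succ
          - (Fin.snoc (Fin.cons 0 r) 1 : Fin (n+2) → ℝ) j.castSucc) * y j))
      = ∑ j, Real.sin (y j) * ∏ i ∈ Finset.univ.erase j, (y i / ((y i)^2 - (y j)^2)) := by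
  have h := mainJ n y hy hsq 1 zero_le_one
  simp only [mul_one] at h
  exact h
end

section
/- For ν > −1/2 and real z, G_ν(z²) = (1/(4^ν Γ(ν + 1/2))) ∫_{−1}^{1} (1 − s²)^{ν − 1/2} e^{izs} ds, where G_ν is defined by the power series G_ν(w) = 4^{−ν}√π ∑_{m≥0} (−1)^m (w/4)^m/(m! Γ(ν+m+1)). -/
/-!
Since the weight `(1 - s²)^(ν - 1/2)` is even, the integral equals
`2 ∫₀¹ (1 - s²)^(ν - 1/2) cos (z s) ds`. Expanding the cosine and integrating term by term
(dominated by `cosh |z|`), the substitution `t = s²` turns the even moments into Beta integrals,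
`∫₀¹ (1 - s²)^(ν - 1/2) s^(2m) ds = Γ(m + 1/2) Γ(ν + 1/2) / (2 Γ(ν + m + 1))`, and
`Γ(m + 1/2) 4^m m! = (2m)! √π` turns the resulting series into the one defining `G ν (z²)`.
-/

noncomputable def G (ν : ℝ) (w : ℂ) : ℂ :=
  (((4:ℝ)^(-ν) * Real.sqrt Real.pi : ℝ) : ℂ) *
    ∑' m : ℕ, ((-1 : ℂ)^m * (w/4)^m) / ((m.factorial : ℂ) * ((Real.Gamma (ν + m + 1) : ℝ) : ℂ))

open Real MeasureTheory Set intervalIntegral Nat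

lemma Real.Gamma_nat_add_half_mul (m : ℕ) :
    Gamma (m + 1 / 2) * (4 ^ m * m !) = (2 * m)! * √π := by
  induction m with
  | zero => simp [-one_div, Gamma_one_half_eq]
  | succ n ih =>
    rw [Nat.cast_succ, add_right_comm, Gamma_add_one (by positivity),
      show 2 * (n + 1) = 2 * n + 1 + 1 by ring, factorial_succ, factorial_succ, factorial_succ]
    push_cast
    linear_combination (4 * (n + 1 / 2) * (n + 1)) * ih

section Beta

lemma ofReal_rpow_mul_one_sub_rpow {t : ℝ} (ht : t ∈ Icc (0 : ℝ) 1) (a b : ℝ) :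
    ((t ^ (a - 1) * (1 - t) ^ (b - 1) : ℝ) : ℂ) =
      (t : ℂ) ^ ((a : ℂ) - 1) * (1 - (t : ℂ)) ^ ((b : ℂ) - 1) := by
  rw [Complex.ofReal_mul, Complex.ofReal_cpow ht.1, Complex.ofReal_cpow (sub_nonneg.2 ht.2)]
  push_cast
  rfl

lemma Complex.betaIntegral_ofReal (a b : ℝ) :
    betaIntegral a b = ∫ t in (0 : ℝ)..1, ((t ^ (a - 1) * (1 - t) ^ (b - 1) : ℝ) : ℂ) := by
  refine integral_congr fun t ht => (ofReal_rpow_mul_one_sub_rpow ?_ a b).symm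
  rwa [uIcc_of_le zero_le_one] at ht

lemma continuousOn_rpow_mul_one_sub_rpow (a b : ℝ) :
    ContinuousOn (fun t : ℝ => t ^ a * (1 - t) ^ b) (Ioo 0 1) := fun _ ht =>
  (ContinuousAt.mul (continuousAt_id.rpow_const (Or.inl ht.1.ne'))
    ((continuousAt_const.sub continuousAt_id).rpow_const
      (Or.inl (sub_ne_zero.2 ht.2.ne')))).continuousWithinAt

variable {a b : ℝ}

lemma intervalIntegrable_rpow_mul_one_sub_rpow (ha : 0 < a) (hb : 0 < b) :
    IntervalIntegrable (fun t : ℝ => t ^ (a - 1) * (1 - t) ^ (b - 1)) volume 0 1 := by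
  have h : IntervalIntegrable (fun t : ℝ => ((t ^ (a - 1) * (1 - t) ^ (b - 1) : ℝ) : ℂ))
      volume 0 1 := by
    refine (Complex.betaIntegral_convergent (u := a) (v := b) (by simpa) (by simpa)).congr
      fun t ht => (ofReal_rpow_mul_one_sub_rpow ?_ a b).symm
    rw [uIoc_of_le zero_le_one] at ht
    exact Ioc_subset_Icc_self ht
  exact ⟨by simpa [IntegrableOn] using h.1.re, by simp⟩

lemma integral_rpow_mul_one_sub_rpow (ha : 0 < a) (hb : 0 < b) :
    ∫ t in (0 : ℝ)..1, t ^ (a - 1) * (1 - t) ^ (b - 1) = Gamma a * Gamma b / Gamma (a + b) := by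
  have h := Complex.betaIntegral_eq_Gamma_mul_div a b (by simpa) (by simpa)
  rw [Complex.betaIntegral_ofReal, integral_ofReal, ← Complex.ofReal_add,
    Complex.Gamma_ofReal, Complex.Gamma_ofReal, Complex.Gamma_ofReal] at h
  exact_mod_cast h

end Beta

section Moments

variable {p : ℝ}

lemma intervalIntegrable_one_sub_sq_rpow (hp : -1 < p) :
    IntervalIntegrable (fun s : ℝ => (1 - s ^ 2) ^ p) volume 0 1 := by
  have h1 : IntervalIntegrable (fun s : ℝ => (1 - s) ^ p) volume 0 1 := by
    simpa using ((intervalIntegrable_rpow' (a := 0) (b := 1) hp).comp_sub_left 1).symm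
  have h2 : ContinuousOn (fun s : ℝ => (1 + s) ^ p) (uIcc 0 1) := by
    refine ContinuousOn.rpow_const (by fun_prop) fun s hs => Or.inl ?_
    rw [uIcc_of_le zero_le_one] at hs
    linarith [hs.1]
  refine (h1.mul_continuousOn h2).congr fun s hs => ?_
  rw [uIoc_of_le zero_le_one] at hs
  rw [← mul_rpow (by linarith [hs.2]) (by linarith [hs.1])]
  ring_nf

lemma sq_rpow_nat_sub_half_mul_self {s : ℝ} (hs : 0 < s) (m : ℕ) :
    (s ^ 2) ^ ((m : ℝ) - 1 / 2) * s = s ^ (2 * m) := by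
  rw [rpow_sub (pow_pos hs 2), rpow_natCast, ← sqrt_eq_rpow, sqrt_sq hs.le, ← pow_mul,
    div_mul_cancel₀ _ hs.ne']

lemma integral_one_sub_sq_rpow_mul_pow (hp : -1 < p) (m : ℕ) :
    ∫ s in (0 : ℝ)..1, (1 - s ^ 2) ^ p * s ^ (2 * m) =
      Gamma (m + 1 / 2) * Gamma (p + 1) / (2 * Gamma (m + 1 / 2 + (p + 1))) := by
  have hsq : EqOn
      (fun s : ℝ => (s ^ 2) ^ ((m : ℝ) + 1 / 2 - 1) * (1 - s ^ 2) ^ (p + 1 - 1) * (2 * s))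
      (fun s => 2 * ((1 - s ^ 2) ^ p * s ^ (2 * m))) (Ioc 0 1) := by
    intro s hs
    simp only [add_sub_cancel_right, show (m : ℝ) + 1 / 2 - 1 = m - 1 / 2 by ring]
    rw [← sq_rpow_nat_sub_half_mul_self hs.1 m]
    ring
  have hsub := integral_comp_mul_deriv''' (a := 0) (b := 1) (f := fun s => s ^ 2)
    (f' := fun s => 2 * s) (g := fun t => t ^ ((m : ℝ) + 1 / 2 - 1) * (1 - t) ^ (p + 1 - 1))
    (by fun_prop) (fun s _ => by simpa using (hasDerivAt_pow 2 s).hasDerivWithinAt)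
    ?cont ?int ?int'
  case cont =>
    refine (continuousOn_rpow_mul_one_sub_rpow _ _).mono ?_
    rintro _ ⟨s, hs, rfl⟩
    simp only [min_eq_left zero_le_one, max_eq_right zero_le_one] at hs
    exact ⟨pow_pos hs.1 2, pow_lt_one₀ hs.1.le hs.2 two_ne_zero⟩
  case int =>
    rw [uIcc_of_le zero_le_one]
    exact ((intervalIntegrable_iff_integrableOn_Icc_of_le zero_le_one).1
      (intervalIntegrable_rpow_mul_one_sub_rpow (by positivity) (by linarith))).mono_set
      (image_subset_iff.2 fun s hs => ⟨by positivity, pow_le_one₀ hs.1 hs.2⟩)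
  case int' =>
    rw [uIcc_of_le zero_le_one, integrableOn_Icc_iff_integrableOn_Ioc]
    refine IntegrableOn.congr_fun ?_ hsq.symm measurableSet_Ioc
    refine (((intervalIntegrable_one_sub_sq_rpow hp).mul_continuousOn ?_).const_mul 2).1
    fun_prop
  simp only [Function.comp_def] at hsub
  rw [zero_pow two_ne_zero, one_pow, integral_rpow_mul_one_sub_rpow (by positivity) (by linarith),
    integral_congr_ae (ae_of_all _ fun s hs => hsq (by rwa [uIoc_of_le zero_le_one] at hs)),
    intervalIntegral.integral_const_mul] at hsub
  linear_combination hsub / 2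

end Moments

section CosineTransform

variable {f : ℝ → ℝ} {a : ℝ}

lemma integral_ofReal_mul_exp_of_even (hf : ∀ s, f (-s) = f s)
    (hint : IntervalIntegrable f volume 0 a) (z : ℝ) :
    ∫ s in -a..a, (f s : ℂ) * Complex.exp (Complex.I * z * s) =
      ((2 * ∫ s in (0 : ℝ)..a, f s * cos (z * s) : ℝ) : ℂ) := by
  have hint_exp (c : ℂ) :
      IntervalIntegrable (fun s : ℝ => (f s : ℂ) * Complex.exp (c * s)) volume 0 a :=
    IntervalIntegrable.mul_continuousOn ⟨hint.1.ofReal, hint.2.ofReal⟩ (by fun_prop)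
  have hint_neg : IntervalIntegrable (fun s : ℝ => (f s : ℂ) * Complex.exp (Complex.I * z * s))
      volume (-a) 0 := by
    have h := ((IntervalIntegrable.iff_comp_neg).mp (hint_exp (-(Complex.I * z)))).symm
    rw [neg_zero] at h
    refine h.congr fun s _ => ?_
    simp [hf]
  have hneg : ∫ s in -a..0, (f s : ℂ) * Complex.exp (Complex.I * z * s) =
      ∫ s in (0 : ℝ)..a, (f s : ℂ) * Complex.exp (-(Complex.I * z) * s) := by
    rw [← neg_zero, ← integral_comp_neg, neg_zero]
    refine integral_congr fun s _ => ?_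
    simp [hf]
  rw [← integral_add_adjacent_intervals hint_neg (hint_exp _), hneg,
    ← integral_add (hint_exp _) (hint_exp _), Complex.ofReal_mul,
    ← intervalIntegral.integral_ofReal, ← intervalIntegral.integral_const_mul]
  refine integral_congr fun s _ => ?_
  push_cast
  rw [Complex.cos]
  ring_nf

lemma hasSum_integral_mul_cos (hf : IntervalIntegrable f volume 0 a) (z : ℝ) :
    HasSum (fun m : ℕ => (-1) ^ m * z ^ (2 * m) / (2 * m)! * ∫ s in (0 : ℝ)..a, f s * s ^ (2 * m))
      (∫ s in (0 : ℝ)..a, f s * cos (z * s)) := by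
  have hbound_sum (s : ℝ) : HasSum (fun m : ℕ => |f s| * (|z * a| ^ (2 * m) / (2 * m)!))
      (|f s| * cosh |z * a|) :=
    (hasSum_cosh _).mul_left _
  have h := hasSum_integral_of_dominated_convergence (μ := volume) (a := 0) (b := a)
    (F := fun (m : ℕ) s => f s * ((-1) ^ m * (z * s) ^ (2 * m) / (2 * m)!))
    (fun m s => |f s| * (|z * a| ^ (2 * m) / (2 * m)!)) ?meas ?bound
    (ae_of_all _ fun s _ => (hbound_sum s).summable) ?int
    (ae_of_all _ fun s _ => (hasSum_cos (z * s)).mul_left (f s))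
  case meas => exact fun m => (hf.mul_continuousOn (by fun_prop)).def'.aestronglyMeasurable
  case bound =>
    refine fun m => ae_of_all _ fun s hs => ?_
    have hsa : |s| ≤ |a| := by
      simpa using abs_sub_left_of_mem_uIcc (uIoc_subset_uIcc hs)
    simp only [norm_mul, norm_div, norm_pow, norm_neg, norm_one, one_pow, one_mul,
      Real.norm_eq_abs, Nat.abs_cast, abs_mul]
    gcongr
  case int =>
    simp_rw [fun s => (hbound_sum s).tsum_eq]
    exact hf.abs.mul_const _
  refine h.congr_fun fun m => ?_
  rw [← intervalIntegral.integral_const_mul]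
  refine integral_congr fun s _ => ?_
  ring

end CosineTransform

lemma hasSum_G_series_integral_cos {ν : ℝ} (hν : -(1 / 2) < ν) (z : ℝ) :
    HasSum (fun m : ℕ => (-1) ^ m * (z ^ 2 / 4) ^ m / (m ! * Gamma (ν + m + 1)))
      (2 / (√π * Gamma (ν + 1 / 2)) *
        ∫ s in (0 : ℝ)..1, (1 - s ^ 2) ^ (ν - 1 / 2) * cos (z * s)) := by
  have hp : -1 < ν - 1 / 2 := by linarith
  refine ((hasSum_integral_mul_cos (intervalIntegrable_one_sub_sq_rpow hp) z).mul_left _).congr_fun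
    fun m => ?_
  rw [integral_one_sub_sq_rpow_mul_pow hp, show ν - 1 / 2 + 1 = ν + 1 / 2 by ring,
    show (m : ℝ) + 1 / 2 + (ν + 1 / 2) = ν + m + 1 by ring,
    eq_div_of_mul_eq (by positivity) (Gamma_nat_add_half_mul m).symm]
  have hA : Gamma (ν + m + 1) ≠ 0 := (Gamma_pos_of_pos (by linarith [m.cast_nonneg (α := ℝ)])).ne'
  have hB : Gamma (ν + 1 / 2) ≠ 0 := (Gamma_pos_of_pos (by linarith)).ne'
  generalize Gamma (ν + 1 / 2) = B at hB ⊢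
  rw [div_pow, ← pow_mul]
  field_simp

theorem G_poisson_integral (ν : ℝ) (hν : -(1/2) < ν) (z : ℝ) :
    G ν ((z:ℂ)^2) = (((4:ℝ)^(-ν) / Real.Gamma (ν + 1/2) : ℝ) : ℂ) *
      ∫ s in (-1:ℝ)..1, (((1 - s^2) ^ (ν - 1/2) : ℝ) : ℂ) *
        Complex.exp (Complex.I * z * s) := by
  have hseries : HasSum (fun m : ℕ => ((-1 : ℂ) ^ m * ((z : ℂ) ^ 2 / 4) ^ m) /
      ((m ! : ℂ) * ((Gamma (ν + m + 1) : ℝ) : ℂ)))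
      ((2 / (√π * Gamma (ν + 1 / 2)) *
        ∫ s in (0 : ℝ)..1, (1 - s ^ 2) ^ (ν - 1 / 2) * cos (z * s) : ℝ) : ℂ) := by
    exact_mod_cast Complex.hasSum_ofReal.mpr (hasSum_G_series_integral_cos hν z)
  rw [G, hseries.tsum_eq, integral_ofReal_mul_exp_of_even (by simp)
    (intervalIntegrable_one_sub_sq_rpow (by linarith)), ← Complex.ofReal_mul,
    ← Complex.ofReal_mul]
  congr 1
  generalize ∫ s in (0 : ℝ)..1, (1 - s ^ 2) ^ (ν - 1 / 2) * cos (z * s) = J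
  have : 0 < Gamma (ν + 1 / 2) := Gamma_pos_of_pos (by linarith)
  field_simp
end

section
/- For all real t and a ≥ 0, ∫₀¹ J₀(t·a·√(s − s²)) ds = sin(t·a/2)/(t·a/2), where J₀(z) = ∑_{j≥0} (−1)^j (z/2)^{2j}/(j!)² and the right side is interpreted as 1 when t·a = 0. -/
/-! Substituting `z = c √(s - s²)` into the series of `J0` makes the integrand a power series in
`s (1 - s) ∈ [0, 1]`, dominated termwise by the absolute series of `J0 c`. Integrating term by
term with the Beta integral `∫₀¹ sʲ (1 - s)ʲ ds = (j!)² / (2j+1)!` leaves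
`∑ⱼ (-1)ʲ (c/2)^(2j) / (2j+1)!`, the Taylor series of `sinc (c/2)`. -/

noncomputable def J0 (z : ℝ) : ℝ :=
  ∑' j : ℕ, (-1:ℝ)^j * (z/2)^(2*j) / ((j.factorial : ℝ))^2

open MeasureTheory Nat Interval

theorem integral_pow_mul_one_sub_pow (m n : ℕ) :
    ∫ x in (0:ℝ)..1, x ^ m * (1 - x) ^ n = (m ! * n ! : ℝ) / (m + n + 1)! := by
  have hbeta := Complex.betaIntegral_eq_Gamma_mul_div (m + 1) (n + 1)
    (by simp; positivity) (by simp; positivity)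
  have hreal : Complex.betaIntegral (m + 1) (n + 1) = ↑(∫ x in (0:ℝ)..1, x ^ m * (1 - x) ^ n) := by
    rw [Complex.betaIntegral, ← intervalIntegral.integral_ofReal]
    refine intervalIntegral.integral_congr fun x _ => ?_
    simp only [add_sub_cancel_right, Complex.cpow_natCast]
    push_cast
    rfl
  rw [hreal, show (m : ℂ) + 1 + (n + 1) = ↑(m + n + 1) + 1 by push_cast; ring,
    Complex.Gamma_nat_eq_factorial, Complex.Gamma_nat_eq_factorial,
    Complex.Gamma_nat_eq_factorial] at hbeta
  exact Complex.ofReal_injective (by push_cast at hbeta ⊢; exact hbeta)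

theorem Real.hasSum_sinc (x : ℝ) :
    HasSum (fun j : ℕ => (-1) ^ j * x ^ (2 * j) / (2 * j + 1)!) (Real.sinc x) := by
  rcases eq_or_ne x 0 with rfl | hx
  · rw [Real.sinc_zero]
    convert hasSum_ite_eq 0 (1 : ℝ) using 2 with j
    split_ifs with hj <;> simp [hj]
  · rw [Real.sinc_of_ne_zero hx]
    have hterm (j : ℕ) :
        (-1) ^ j * x ^ (2 * j + 1) / (2 * j + 1)! / x = (-1) ^ j * x ^ (2 * j) / (2 * j + 1)! := by
      rw [pow_succ]
      field_simp
    simpa only [hterm] using (Real.hasSum_sin x).div_const x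

theorem summable_J0_series (z : ℝ) :
    Summable fun j : ℕ => (-1 : ℝ) ^ j * (z / 2) ^ (2 * j) / (j ! : ℝ) ^ 2 := by
  refine .of_norm_bounded (Real.summable_pow_div_factorial ((z / 2) ^ 2)) fun j => ?_
  rw [norm_div, norm_mul, norm_pow, norm_neg, norm_one, one_pow, one_mul, norm_pow, pow_mul,
    Real.norm_eq_abs, sq_abs, norm_pow, Real.norm_natCast]
  gcongr
  exact le_self_pow₀ (mod_cast j.factorial_pos) two_ne_zero

theorem hasSum_J0_mul_sqrt (c : ℝ) {u : ℝ} (hu : 0 ≤ u) :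
    HasSum (fun j : ℕ => (-1 : ℝ) ^ j * (c / 2) ^ (2 * j) / (j ! : ℝ) ^ 2 * u ^ j)
      (J0 (c * √u)) := by
  have hterm (j : ℕ) : (-1 : ℝ) ^ j * (c * √u / 2) ^ (2 * j) / (j ! : ℝ) ^ 2
      = (-1 : ℝ) ^ j * (c / 2) ^ (2 * j) / (j ! : ℝ) ^ 2 * u ^ j := by
    rw [show c * √u / 2 = c / 2 * √u by ring, mul_pow, pow_mul √u, Real.sq_sqrt hu]
    ring
  have h : HasSum _ (J0 (c * √u)) := (summable_J0_series (c * √u)).hasSum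
  simpa only [hterm] using h

theorem hasSum_integral_J0_mul_sqrt_sub_sq (c : ℝ) :
    HasSum (fun j : ℕ => (-1 : ℝ) ^ j * (c / 2) ^ (2 * j) / (2 * j + 1)!)
      (∫ s in (0:ℝ)..1, J0 (c * √(s - s ^ 2))) := by
  set a : ℕ → ℝ := fun j => (-1 : ℝ) ^ j * (c / 2) ^ (2 * j) / (j ! : ℝ) ^ 2
  have hint (j : ℕ) : ∫ s in (0:ℝ)..1, a j * (s - s ^ 2) ^ j
      = (-1 : ℝ) ^ j * (c / 2) ^ (2 * j) / (2 * j + 1)! := by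
    simp_rw [show ∀ s : ℝ, (s - s ^ 2) ^ j = s ^ j * (1 - s) ^ j from
      fun s => by rw [← mul_pow]; ring]
    rw [intervalIntegral.integral_const_mul, integral_pow_mul_one_sub_pow, ← two_mul]
    simp only [a]
    field_simp
  have hbounds {s : ℝ} (hs : s ∈ Ι (0:ℝ) 1) : 0 ≤ s - s ^ 2 ∧ s - s ^ 2 ≤ 1 := by
    rw [Set.uIoc_of_le zero_le_one] at hs
    constructor <;> nlinarith [hs.1, hs.2]
  simp only [← hint]
  refine intervalIntegral.hasSum_integral_of_dominated_convergence (fun j _ => ‖a j‖)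
    (fun j => (by fun_prop : Continuous _).aestronglyMeasurable) (fun j => ?_)
    (ae_of_all _ fun _ _ => (summable_J0_series c).norm) intervalIntegrable_const
    (ae_of_all _ fun s hs => hasSum_J0_mul_sqrt c ?_)
  · refine ae_of_all _ fun s hs => ?_
    obtain ⟨h0, h1⟩ := hbounds hs
    rw [norm_mul, norm_pow, Real.norm_of_nonneg h0]
    exact mul_le_of_le_one_right (norm_nonneg _) (pow_le_one₀ h0 h1)
  · exact (hbounds hs).1

theorem J0_simplex_integral_general (t a : ℝ) :
    ∫ s in (0:ℝ)..1, J0 (t * a * Real.sqrt (s - s^2))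
      = if t * a = 0 then 1 else Real.sin (t*a/2) / (t*a/2) := by
  have hsinc : (if t * a = 0 then 1 else Real.sin (t*a/2) / (t*a/2)) = Real.sinc (t * a / 2) := by
    simp [Real.sinc_apply]
  rw [hsinc]
  exact (hasSum_integral_J0_mul_sqrt_sub_sq (t * a)).unique (Real.hasSum_sinc _)

theorem J0_simplex_integral (t a : ℝ) (ha : 0 ≤ a) :
    ∫ s in (0:ℝ)..1, J0 (t * a * Real.sqrt (s - s^2))
      = if t * a = 0 then 1 else Real.sin (t*a/2) / (t*a/2) :=
  J0_simplex_integral_general t a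
end

section
/- Let F ∈ C(ℝ≥0) be bounded, n ≥ 0 an integer, and define recursively F_{0,n} = F and F_{m+1,n}(t) = −∫₀¹ s^{n+2m} F_{m,n}(st) ds. Then for every even Schwartz function φ on ℝ and every m ≥ 1, ∫₀^∞ tⁿ F(t) φ(t) dt = ∫₀^∞ t^{n+2m} F_{m,n}(t) (t^{−1}∂_t)^m φ(t) dt. -/
/-!
Each step `m → m + 1` is one integration by parts on `(0, ∞)`: by the substitution `u = s t`,
`t ^ (n + 2m + 1) F_{m+1}(t) = -∫₀ᵗ u ^ (n + 2m) F_m(u) du` is a primitive of `-t ^ (n + 2m) F_m`,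
while `∂ₜ (t⁻¹∂ₜ)^m φ = t (t⁻¹∂ₜ)^(m+1) φ`. The boundary terms vanish and the integrals converge
because `(t⁻¹∂ₜ)^m φ` is a finite sum of terms `c t^z φ⁽ᵏ⁾(t)` with `z ≥ -2m`: its pole of order at
most `2m` at `0` is absorbed by the weight, and it decays rapidly at `∞`.
-/

noncomputable def Frec (F : ℝ → ℂ) (n : ℕ) : ℕ → ℝ → ℂ
  | 0 => F
  | (m+1) => fun t => -∫ s in (0:ℝ)..1, (s:ℂ)^(n+2*m) * Frec F n m (s*t)

/-- The operator `f ↦ t⁻¹ ∂ₜ f`. -/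
noncomputable def invD (g : ℝ → ℂ) : ℝ → ℂ := fun t => (t : ℂ)⁻¹ * deriv g t

open Set Filter Topology MeasureTheory
open scoped ContDiff SchwartzMap

def RapidDecayWithPole {E : Type*} [NormedAddCommGroup E] (j : ℕ) (f : ℝ → E) : Prop :=
  ∀ N : ℕ, ∃ C, ∀ t > 0, t ^ j * (1 + t) ^ N * ‖f t‖ ≤ C

namespace RapidDecayWithPole

section General

variable {E F : Type*} [NormedAddCommGroup E] [NormedAddCommGroup F] {j : ℕ} {f g : ℝ → E}

theorem congr (hf : RapidDecayWithPole j f) (hfg : ∀ t > 0, f t = g t) :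
    RapidDecayWithPole j g := fun N => by
  obtain ⟨C, hC⟩ := hf N
  exact ⟨C, fun t ht => hfg t ht ▸ hC t ht⟩

theorem mono (hf : RapidDecayWithPole j f) {j' : ℕ} (hj : j ≤ j') :
    RapidDecayWithPole j' f := fun N => by
  obtain ⟨d, rfl⟩ := Nat.exists_eq_add_of_le hj
  obtain ⟨C, hC⟩ := hf (d + N)
  refine ⟨C, fun t ht => le_trans ?_ (hC t ht)⟩
  have hd : t ^ d ≤ (1 + t) ^ d := pow_le_pow_left₀ ht.le (by linarith) d
  calc t ^ (j + d) * (1 + t) ^ N * ‖f t‖ = t ^ j * t ^ d * (1 + t) ^ N * ‖f t‖ := by ring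
    _ ≤ t ^ j * (1 + t) ^ d * (1 + t) ^ N * ‖f t‖ := by gcongr
    _ = t ^ j * (1 + t) ^ (d + N) * ‖f t‖ := by ring

theorem add (hf : RapidDecayWithPole j f) (hg : RapidDecayWithPole j g) :
    RapidDecayWithPole j (fun t => f t + g t) := fun N => by
  obtain ⟨C, hC⟩ := hf N
  obtain ⟨D, hD⟩ := hg N
  refine ⟨C + D, fun t ht => ?_⟩
  calc t ^ j * (1 + t) ^ N * ‖f t + g t‖
      ≤ t ^ j * (1 + t) ^ N * ‖f t‖ + t ^ j * (1 + t) ^ N * ‖g t‖ := by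
        rw [← mul_add]; gcongr; exact norm_add_le _ _
    _ ≤ C + D := add_le_add (hC t ht) (hD t ht)

theorem sum {ι : Type*} (s : Finset ι) {f : ι → ℝ → E}
    (hf : ∀ i ∈ s, RapidDecayWithPole j (f i)) :
    RapidDecayWithPole j (fun t => ∑ i ∈ s, f i t) := by
  classical
  induction s using Finset.induction_on with
  | empty => exact fun _ => ⟨0, fun t _ => by simp⟩
  | insert i s hi ih =>
    simp_rw [Finset.sum_insert hi]
    exact (hf i (s.mem_insert_self i)).add (ih fun k hk => hf k (Finset.mem_insert_of_mem hk))

theorem integrableOn {g : ℝ → F} {B : ℝ} (hf : RapidDecayWithPole j f)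
    (hg : AEStronglyMeasurable g (volume.restrict (Ioi 0)))
    (hgf : ∀ t > 0, ‖g t‖ ≤ B * (t ^ j * ‖f t‖)) : IntegrableOn g (Ioi 0) := by
  obtain ⟨C, hC⟩ := hf 2
  refine Integrable.mono' ((integrable_inv_one_add_sq.const_mul (|B| * C)).integrableOn) hg
    ((ae_restrict_iff' measurableSet_Ioi).2 (Eventually.of_forall fun t (ht : 0 < t) => ?_))
  have hsq : 1 + t ^ 2 ≤ (1 + t) ^ 2 := by nlinarith
  have hdecay : t ^ j * ‖f t‖ ≤ C * (1 + t ^ 2)⁻¹ := by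
    rw [← div_eq_mul_inv, le_div_iff₀ (by positivity)]
    calc t ^ j * ‖f t‖ * (1 + t ^ 2) ≤ t ^ j * ‖f t‖ * (1 + t) ^ 2 := by gcongr
      _ = t ^ j * (1 + t) ^ 2 * ‖f t‖ := by ring
      _ ≤ C := hC t ht
  calc ‖g t‖ ≤ B * (t ^ j * ‖f t‖) := hgf t ht
    _ ≤ |B| * (C * (1 + t ^ 2)⁻¹) := by
      grw [le_abs_self B, hdecay]
    _ = |B| * C * (1 + t ^ 2)⁻¹ := by ring

theorem tendsto_nhdsGT_zero {g : ℝ → F} {B : ℝ} (hf : RapidDecayWithPole j f)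
    (hgf : ∀ t > 0, ‖g t‖ ≤ B * (t ^ (j + 1) * ‖f t‖)) : Tendsto g (𝓝[>] 0) (𝓝 0) := by
  obtain ⟨C, hC⟩ := hf 0
  refine squeeze_zero_norm' (a := fun t => |B| * C * t) ?_ ?_
  · filter_upwards [self_mem_nhdsWithin] with t (ht : 0 < t)
    calc ‖g t‖ ≤ |B| * (t * (t ^ j * (1 + t) ^ 0 * ‖f t‖)) := by
          grw [hgf t ht, le_abs_self B]; ring_nf; rfl
      _ ≤ |B| * (t * C) := by grw [hC t ht]
      _ = |B| * C * t := by ring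
  · exact ((continuous_const_mul (|B| * C)).tendsto' 0 0 (mul_zero _)).mono_left nhdsWithin_le_nhds

theorem tendsto_atTop_zero {g : ℝ → F} {B : ℝ} (hf : RapidDecayWithPole j f)
    (hgf : ∀ t > 0, ‖g t‖ ≤ B * (t ^ (j + 1) * ‖f t‖)) : Tendsto g atTop (𝓝 0) := by
  obtain ⟨C, hC⟩ := hf 2
  refine squeeze_zero_norm' (a := fun t => |B| * C * (1 + t)⁻¹) ?_ ?_
  · filter_upwards [eventually_gt_atTop 0] with t ht
    have hdecay : t ^ (j + 1) * ‖f t‖ ≤ C * (1 + t)⁻¹ := by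
      rw [← div_eq_mul_inv, le_div_iff₀ (by positivity)]
      calc t ^ (j + 1) * ‖f t‖ * (1 + t) ≤ t ^ j * (1 + t) * ‖f t‖ * (1 + t) := by
            rw [pow_succ]; gcongr; linarith
        _ = t ^ j * (1 + t) ^ 2 * ‖f t‖ := by ring
        _ ≤ C := hC t ht
    calc ‖g t‖ ≤ |B| * (C * (1 + t)⁻¹) := by grw [hgf t ht, le_abs_self B, hdecay]
      _ = |B| * C * (1 + t)⁻¹ := by ring
  · simpa using (tendsto_inv_atTop_zero.comp
      (tendsto_atTop_add_const_left atTop 1 tendsto_id)).const_mul (|B| * C)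

end General

variable {j : ℕ} {f : ℝ → ℂ}

theorem ofReal_mul (hf : RapidDecayWithPole (j + 1) f) :
    RapidDecayWithPole j (fun t => (t : ℂ) * f t) := fun N => by
  obtain ⟨C, hC⟩ := hf N
  refine ⟨C, fun t ht => ?_⟩
  rw [norm_mul, Complex.norm_real, Real.norm_of_nonneg ht.le]
  calc t ^ j * (1 + t) ^ N * (t * ‖f t‖) = t ^ (j + 1) * (1 + t) ^ N * ‖f t‖ := by ring
    _ ≤ C := hC t ht

theorem const_mul_zpow_mul (hf : RapidDecayWithPole 0 f) (c : ℂ) {z : ℤ} (hz : -(j : ℤ) ≤ z) :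
    RapidDecayWithPole j (fun t => c * (t : ℂ) ^ z * f t) := fun N => by
  obtain ⟨e, he⟩ : ∃ e : ℕ, (j : ℤ) + z = e :=
    ⟨(j + z).toNat, (Int.toNat_of_nonneg (by omega)).symm⟩
  obtain ⟨C, hC⟩ := hf (e + N)
  refine ⟨‖c‖ * C, fun t ht => ?_⟩
  have hpow : t ^ j * ‖(t : ℂ) ^ z‖ = t ^ e := by
    rw [norm_zpow, Complex.norm_real, Real.norm_of_nonneg ht.le, ← zpow_natCast,
      ← zpow_add₀ ht.ne', he, zpow_natCast]
  have he : t ^ e ≤ (1 + t) ^ e := pow_le_pow_left₀ ht.le (by linarith) e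
  calc t ^ j * (1 + t) ^ N * ‖c * (t : ℂ) ^ z * f t‖
      = ‖c‖ * (t ^ j * ‖(t : ℂ) ^ z‖ * (1 + t) ^ N * ‖f t‖) := by
        rw [norm_mul, norm_mul]; ring
    _ ≤ ‖c‖ * (t ^ 0 * (1 + t) ^ (e + N) * ‖f t‖) := by
        rw [hpow, pow_zero, one_mul, pow_add]; gcongr
    _ ≤ ‖c‖ * C := by grw [hC t ht]

end RapidDecayWithPole

theorem SchwartzMap.rapidDecayWithPole_iteratedDeriv {E : Type*} [NormedAddCommGroup E]
    [NormedSpace ℝ E] (φ : 𝓢(ℝ, E)) (k : ℕ) : RapidDecayWithPole 0 (iteratedDeriv k φ) := by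
  intro N
  refine ⟨2 ^ N * (Finset.Iic (N, k)).sup (fun m => SchwartzMap.seminorm ℝ m.1 m.2) φ,
    fun t ht => ?_⟩
  have := SchwartzMap.one_add_le_sup_seminorm_apply (𝕜 := ℝ) (m := (N, k)) le_rfl le_rfl φ t
  rw [norm_iteratedFDeriv_eq_norm_iteratedDeriv, Real.norm_of_nonneg ht.le] at this
  simpa using this

theorem hasDerivAt_mul_invD {f : ℝ → ℂ} {t : ℝ} (hf : DifferentiableAt ℝ f t) (ht : t ≠ 0) :
    HasDerivAt f ((t : ℂ) * invD f t) t := by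
  rw [invD, mul_inv_cancel_left₀ (Complex.ofReal_ne_zero.2 ht)]
  exact hf.hasDerivAt

section PolarComb

variable {φ : ℝ → ℂ} {j : ℕ} {f : ℝ → ℂ}

/-- The representation is only required on `(0, ∞)`, where `invD` and negative powers of `t` do
not take junk values. -/
def IsPolarComb (φ : ℝ → ℂ) (j : ℕ) (f : ℝ → ℂ) : Prop :=
  ∃ (ι : Type) (s : Finset ι) (c : ι → ℂ) (z : ι → ℤ) (k : ι → ℕ), (∀ i, -(j : ℤ) ≤ z i) ∧
    ∀ t > 0, f t = ∑ i ∈ s, c i * (t : ℂ) ^ z i * iteratedDeriv (k i) φ t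

theorem hasDerivAt_sum_zpow_mul_iteratedDeriv (hφ : ContDiff ℝ ∞ φ) {ι : Type*} (s : Finset ι)
    (c : ι → ℂ) (z : ι → ℤ) (k : ι → ℕ) {t : ℝ} (ht : t ≠ 0) :
    HasDerivAt (fun t : ℝ => ∑ i ∈ s, c i * (t : ℂ) ^ z i * iteratedDeriv (k i) φ t)
      (∑ i ∈ s, (c i * (z i * (t : ℂ) ^ (z i - 1)) * iteratedDeriv (k i) φ t
        + c i * (t : ℂ) ^ z i * iteratedDeriv (k i + 1) φ t)) t := by
  refine HasDerivAt.fun_sum fun i _ => ?_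
  have hz : HasDerivAt (fun s : ℝ => (s : ℂ) ^ z i) (z i * (t : ℂ) ^ (z i - 1)) t :=
    (hasDerivAt_zpow (z i) (t : ℂ) (Or.inl (Complex.ofReal_ne_zero.2 ht))).comp_ofReal
  have hk : HasDerivAt (iteratedDeriv (k i) φ) (iteratedDeriv (k i + 1) φ t) t := by
    rw [iteratedDeriv_succ]
    exact (hφ.differentiable_iteratedDeriv (k i)
      (by exact_mod_cast ENat.natCast_lt_top _) t).hasDerivAt
  exact (hz.const_mul (c i)).fun_mul hk

theorem IsPolarComb.differentiableAt (hφ : ContDiff ℝ ∞ φ) (hf : IsPolarComb φ j f) {t : ℝ}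
    (ht : 0 < t) : DifferentiableAt ℝ f t := by
  obtain ⟨ι, s, c, z, k, -, hfs⟩ := hf
  exact ((hasDerivAt_sum_zpow_mul_iteratedDeriv hφ s c z k ht.ne').congr_of_eventuallyEq
    (eventually_of_mem (Ioi_mem_nhds ht) hfs)).differentiableAt

theorem IsPolarComb.invD (hφ : ContDiff ℝ ∞ φ) (hf : IsPolarComb φ j f) :
    IsPolarComb φ (j + 2) (invD f) := by
  obtain ⟨ι, s, c, z, k, hz, hfs⟩ := hf
  refine ⟨ι ⊕ ι, s.disjSum s, Sum.elim (fun i => c i * z i) c,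
    Sum.elim (fun i => z i - 2) (fun i => z i - 1), Sum.elim k (fun i => k i + 1), ?_, ?_⟩
  · rintro (i | i) <;> simp only [Sum.elim_inl, Sum.elim_inr] <;> push_cast <;> linarith [hz i]
  intro t ht
  have htC : (t : ℂ) ≠ 0 := Complex.ofReal_ne_zero.2 ht.ne'
  rw [_root_.invD, ((hasDerivAt_sum_zpow_mul_iteratedDeriv hφ s c z k ht.ne').congr_of_eventuallyEq
    (eventually_of_mem (Ioi_mem_nhds ht) hfs)).deriv, Finset.sum_disjSum, Finset.mul_sum,
    ← Finset.sum_add_distrib]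
  refine Finset.sum_congr rfl fun i _ => ?_
  simp only [Sum.elim_inl, Sum.elim_inr, zpow_sub₀ htC]
  field_simp

theorem IsPolarComb.rapidDecayWithPole (φ : 𝓢(ℝ, ℂ)) (hf : IsPolarComb φ j f) :
    RapidDecayWithPole j f := by
  obtain ⟨ι, s, c, z, k, hz, hfs⟩ := hf
  exact (RapidDecayWithPole.sum s fun i _ =>
    (φ.rapidDecayWithPole_iteratedDeriv (k i)).const_mul_zpow_mul (c i) (hz i)).congr
      fun t ht => (hfs t ht).symm

theorem isPolarComb_iterate_invD (hφ : ContDiff ℝ ∞ φ) (m : ℕ) :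
    IsPolarComb φ (2 * m) (invD^[m] φ) := by
  induction m with
  | zero => exact ⟨Unit, {()}, 1, 0, 0, fun _ => le_rfl, fun t _ => by simp⟩
  | succ m ih =>
    rw [Function.iterate_succ_apply']
    exact ih.invD hφ

end PolarComb

theorem pow_succ_mul_integral_comp_mul (f : ℝ → ℂ) (p : ℕ) (t : ℝ) :
    (t : ℂ) ^ (p + 1) * ∫ s in (0 : ℝ)..1, (s : ℂ) ^ p * f (s * t)
      = ∫ u in (0 : ℝ)..t, (u : ℂ) ^ p * f u := by
  rcases eq_or_ne t 0 with rfl | ht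
  · simp
  have h := intervalIntegral.integral_comp_mul_right (a := 0) (b := 1)
    (fun u : ℝ => (u : ℂ) ^ p * f u) ht
  have hpull : ∫ s in (0 : ℝ)..1, ((s * t : ℝ) : ℂ) ^ p * f (s * t)
      = (t : ℂ) ^ p * ∫ s in (0 : ℝ)..1, (s : ℂ) ^ p * f (s * t) := by
    rw [← intervalIntegral.integral_const_mul]
    congr 1 with s
    push_cast
    ring
  simp only [zero_mul, one_mul, Complex.real_smul, Complex.ofReal_inv, hpull] at h
  rw [pow_succ, mul_comm _ (t : ℂ), mul_assoc, h,
    mul_inv_cancel_left₀ (Complex.ofReal_ne_zero.2 ht)]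

theorem norm_integral_pow_mul_comp_mul_le {f : ℝ → ℂ} {C : ℝ} (hf : ∀ u ≥ 0, ‖f u‖ ≤ C) (p : ℕ)
    {t : ℝ} (ht : 0 ≤ t) : ‖∫ s in (0 : ℝ)..1, (s : ℂ) ^ p * f (s * t)‖ ≤ C := by
  have := intervalIntegral.norm_integral_le_of_norm_le_const (a := 0) (b := 1) (C := C)
    (f := fun s : ℝ => (s : ℂ) ^ p * f (s * t)) fun s hs => ?_
  · simpa using this
  rw [uIoc_of_le zero_le_one] at hs
  rw [norm_mul, norm_pow, Complex.norm_real, Real.norm_of_nonneg hs.1.le]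
  calc s ^ p * ‖f (s * t)‖ ≤ 1 * ‖f (s * t)‖ := by gcongr; exact pow_le_one₀ hs.1.le hs.2
    _ ≤ C := by rw [one_mul]; exact hf _ (mul_nonneg hs.1.le ht)

theorem hasDerivAt_integral_pow_mul {f : ℝ → ℂ} {C : ℝ} (hfc : ContinuousOn f (Ioi 0))
    (hfb : ∀ u > 0, ‖f u‖ ≤ C) (p : ℕ) {t : ℝ} (ht : 0 < t) :
    HasDerivAt (fun r => ∫ u in (0 : ℝ)..r, (u : ℂ) ^ p * f u) ((t : ℂ) ^ p * f t) t := by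
  have hc : ContinuousOn (fun u : ℝ => (u : ℂ) ^ p * f u) (Ioi 0) :=
    (Complex.continuous_ofReal.pow p).continuousOn.mul hfc
  have hint : IntervalIntegrable (fun u : ℝ => (u : ℂ) ^ p * f u) volume 0 t := by
    rw [intervalIntegrable_iff_integrableOn_Ioc_of_le ht.le]
    refine IntegrableOn.of_bound measure_Ioc_lt_top
      ((hc.mono Ioc_subset_Ioi_self).aestronglyMeasurable measurableSet_Ioc) (t ^ p * C)
      ((ae_restrict_iff' measurableSet_Ioc).2 (Eventually.of_forall fun u hu => ?_))
    rw [norm_mul, norm_pow, Complex.norm_real, Real.norm_of_nonneg hu.1.le]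
    exact mul_le_mul (pow_le_pow_left₀ hu.1.le hu.2 p) (hfb u hu.1) (norm_nonneg _)
      (by positivity)
  exact intervalIntegral.integral_hasDerivAt_right hint
    (hc.stronglyMeasurableAtFilter isOpen_Ioi t ht) (hc.continuousAt (Ioi_mem_nhds ht))

section Frec

variable {F : ℝ → ℂ} {n : ℕ}

theorem Frec_succ_apply (m : ℕ) (t : ℝ) :
    Frec F n (m + 1) t = -∫ s in (0 : ℝ)..1, (s : ℂ) ^ (n + 2 * m) * Frec F n m (s * t) :=
  rfl

theorem pow_mul_Frec_succ (m : ℕ) (t : ℝ) :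
    (t : ℂ) ^ (n + 2 * m + 1) * Frec F n (m + 1) t
      = -∫ u in (0 : ℝ)..t, (u : ℂ) ^ (n + 2 * m) * Frec F n m u := by
  rw [Frec_succ_apply, mul_neg, pow_succ_mul_integral_comp_mul]

theorem norm_Frec_le {C : ℝ} (hF : ∀ t ≥ 0, ‖F t‖ ≤ C) : ∀ m, ∀ t ≥ 0, ‖Frec F n m t‖ ≤ C
  | 0 => hF
  | m + 1 => fun t ht => by
    rw [Frec_succ_apply, norm_neg]
    exact norm_integral_pow_mul_comp_mul_le (norm_Frec_le hF m) _ ht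

theorem hasDerivAt_pow_mul_Frec_succ {m : ℕ} {C : ℝ} (hc : ContinuousOn (Frec F n m) (Ioi 0))
    (hb : ∀ t > 0, ‖Frec F n m t‖ ≤ C) {t : ℝ} (ht : 0 < t) :
    HasDerivAt (fun t : ℝ => (t : ℂ) ^ (n + 2 * m + 1) * Frec F n (m + 1) t)
      (-((t : ℂ) ^ (n + 2 * m) * Frec F n m t)) t := by
  simp_rw [pow_mul_Frec_succ]
  exact (hasDerivAt_integral_pow_mul hc hb _ ht).neg

theorem continuousOn_Frec {C : ℝ} (hFc : ContinuousOn F (Ici 0)) (hF : ∀ t ≥ 0, ‖F t‖ ≤ C) :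
    ∀ m, ContinuousOn (Frec F n m) (Ioi 0)
  | 0 => hFc.mono Ioi_subset_Ici_self
  | m + 1 => by
    have hpow : ∀ t ∈ Ioi (0 : ℝ), (t : ℂ) ^ (n + 2 * m + 1) ≠ 0 := fun t ht =>
      pow_ne_zero _ (Complex.ofReal_ne_zero.2 (ne_of_gt ht))
    have hU : ContinuousOn (fun t : ℝ => (t : ℂ) ^ (n + 2 * m + 1) * Frec F n (m + 1) t) (Ioi 0) :=
      fun t ht => (hasDerivAt_pow_mul_Frec_succ (continuousOn_Frec hFc hF m)
        (fun u hu => norm_Frec_le hF m u hu.le) ht).continuousAt.continuousWithinAt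
    refine (((Complex.continuous_ofReal.pow _).continuousOn.inv₀ hpow).mul hU).congr
      fun t ht => ?_
    simp only [Pi.mul_apply, Pi.inv_apply, Pi.pow_apply, inv_mul_cancel_left₀ (hpow t ht)]

end Frec

theorem integral_Ioi_mul_deriv_eq_neg_of_rapidDecayWithPole {u u' v v' : ℝ → ℂ} {j : ℕ} {B : ℝ}
    (hu : ∀ t > 0, HasDerivAt u (u' t) t) (hv : ∀ t > 0, HasDerivAt v (v' t) t)
    (hu'c : ContinuousOn u' (Ioi 0)) (hv'c : ContinuousOn v' (Ioi 0))
    (hub : ∀ t > 0, ‖u t‖ ≤ B * t ^ (j + 1)) (hu'b : ∀ t > 0, ‖u' t‖ ≤ B * t ^ j)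
    (hvd : RapidDecayWithPole j v) (hv'd : RapidDecayWithPole (j + 1) v') :
    ∫ t in Ioi (0 : ℝ), u t * v' t = -∫ t in Ioi (0 : ℝ), u' t * v t := by
  have huc : ContinuousOn u (Ioi 0) := fun t ht => (hu t ht).continuousAt.continuousWithinAt
  have hvc : ContinuousOn v (Ioi 0) := fun t ht => (hv t ht).continuousAt.continuousWithinAt
  have huv : ∀ t > 0, ‖(u * v) t‖ ≤ B * (t ^ (j + 1) * ‖v t‖) := fun t ht => by
    rw [Pi.mul_apply, norm_mul, ← mul_assoc]; gcongr; exact hub t ht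
  have huv' : IntegrableOn (u * v') (Ioi 0) :=
    hv'd.integrableOn ((huc.mul hv'c).aestronglyMeasurable measurableSet_Ioi) fun t ht => by
      rw [Pi.mul_apply, norm_mul, ← mul_assoc]; gcongr; exact hub t ht
  have hu'v : IntegrableOn (u' * v) (Ioi 0) :=
    hvd.integrableOn ((hu'c.mul hvc).aestronglyMeasurable measurableSet_Ioi) fun t ht => by
      rw [Pi.mul_apply, norm_mul, ← mul_assoc]; gcongr; exact hu'b t ht
  rw [integral_Ioi_mul_deriv_eq_deriv_mul hu hv huv' hu'v (hvd.tendsto_nhdsGT_zero huv)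
    (hvd.tendsto_atTop_zero huv), sub_zero, zero_sub]

theorem hasDerivAt_iterate_invD {φ : ℝ → ℂ} (hφ : ContDiff ℝ ∞ φ) (m : ℕ) {t : ℝ} (ht : 0 < t) :
    HasDerivAt (invD^[m] φ) ((t : ℂ) * invD^[m + 1] φ t) t := by
  rw [Function.iterate_succ_apply']
  exact hasDerivAt_mul_invD ((isPolarComb_iterate_invD hφ m).differentiableAt hφ ht) ht.ne'

theorem setIntegral_pow_mul_Frec_mul_iterate_invD_succ {F : ℝ → ℂ} {C : ℝ}
    (hFc : ContinuousOn F (Ici 0)) (hF : ∀ t ≥ 0, ‖F t‖ ≤ C) (n : ℕ) (φ : 𝓢(ℝ, ℂ)) (m : ℕ) :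
    ∫ t in Ioi (0 : ℝ), (t : ℂ) ^ (n + 2 * m) * Frec F n m t * invD^[m] φ t
      = ∫ t in Ioi (0 : ℝ),
          (t : ℂ) ^ (n + 2 * (m + 1)) * Frec F n (m + 1) t * invD^[m + 1] φ t := by
  have hφ : ContDiff ℝ ∞ φ := φ.smooth ⊤
  have hFmc : ContinuousOn (Frec F n m) (Ioi 0) := continuousOn_Frec hFc hF m
  have hFm : ∀ t > 0, ‖Frec F n m t‖ ≤ C := fun t ht => norm_Frec_le hF m t ht.le
  have hpow_mul_le : ∀ (k l : ℕ) (t : ℝ), 0 < t → ‖(t : ℂ) ^ k * Frec F n l t‖ ≤ C * t ^ k :=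
    fun k l t ht => by
      rw [norm_mul, norm_pow, Complex.norm_real, Real.norm_of_nonneg ht.le, mul_comm]
      gcongr; exact norm_Frec_le hF l t ht.le
  have key := integral_Ioi_mul_deriv_eq_neg_of_rapidDecayWithPole (B := C)
    (fun t ht => hasDerivAt_pow_mul_Frec_succ hFmc hFm ht)
    (fun t ht => hasDerivAt_iterate_invD hφ m ht)
    ((Complex.continuous_ofReal.pow _).continuousOn.mul hFmc).neg
    (Complex.continuous_ofReal.continuousOn.mul fun t ht =>
      ((isPolarComb_iterate_invD hφ (m + 1)).differentiableAt hφ ht).continuousAt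
        |>.continuousWithinAt)
    (hpow_mul_le _ (m + 1)) (fun t ht => (norm_neg _).trans_le (hpow_mul_le _ m t ht))
    (((isPolarComb_iterate_invD hφ m).rapidDecayWithPole φ).mono (by omega))
    (((isPolarComb_iterate_invD hφ (m + 1)).rapidDecayWithPole φ).mono (j' := n + 2 * m + 1 + 1)
      (by omega)).ofReal_mul
  simp only [neg_mul, integral_neg, neg_neg] at key
  rw [← key]
  congr 1 with t
  ring

theorem trace_integration_by_parts_general (F : ℝ → ℂ)
    (hFc : ContinuousOn F (Set.Ici 0)) (hFb : ∃ C, ∀ t ≥ (0:ℝ), ‖F t‖ ≤ C)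
    (n : ℕ) (φ : SchwartzMap ℝ ℂ)
    (m : ℕ) :
    ∫ t in Set.Ioi (0:ℝ), (t:ℂ)^n * F t * φ t
      = ∫ t in Set.Ioi (0:ℝ), (t:ℂ)^(n+2*m) * Frec F n m t * (invD^[m] (φ : ℝ → ℂ)) t := by
  obtain ⟨C, hC⟩ := hFb
  induction m with
  | zero => simp [Frec]
  | succ m ih => rw [ih, setIntegral_pow_mul_Frec_mul_iterate_invD_succ hFc hC]

theorem trace_integration_by_parts (F : ℝ → ℂ)
    (hFc : ContinuousOn F (Set.Ici 0)) (hFb : ∃ C, ∀ t ≥ (0:ℝ), ‖F t‖ ≤ C)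
    (n : ℕ) (φ : SchwartzMap ℝ ℂ) (hφ : ∀ t, φ (-t) = φ t)
    (m : ℕ) (hm : 1 ≤ m) :
    ∫ t in Set.Ioi (0:ℝ), (t:ℂ)^n * F t * φ t
      = ∫ t in Set.Ioi (0:ℝ), (t:ℂ)^(n+2*m) * Frec F n m t * (invD^[m] (φ : ℝ → ℂ)) t :=
  trace_integration_by_parts_general F hFc hFb n φ m
end

section
/- Let F ∈ C^j([0,∞)) with bounded j-th derivative, and define F_{m,n} recursively by F_{0,n} = F and F_{m+1,n}(t) = −∫₀¹ s^{n+2m} F_{m,n}(st) ds. Then F_{m,n} ∈ C^j([0,∞)) and sup_t |∂_t^j F_{m,n}(t)| ≤ (Γ((n+j+1)/2) / (2^m Γ(m + (n+j+1)/2))) · sup_t |∂_t^j F(t)|. Moreover ∂_t^j F_{m,n}(0) = ((−1)^m Γ((n+j+1)/2)/(2^m Γ(m + (n+j+1)/2))) ∂_t^j F(0). -/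
/-!
Write `A_k G (t) = ∫₀¹ s^k G(st) ds` (`dilationIntegral k G`), so that
`F_{m+1,n} = -A_{n+2m} F_{m,n}`. Differentiating under the integral sign gives
`∂_t A_k G = A_{k+1} (∂_t G)`, hence `∂_t^j A_k G = A_{k+j} (∂_t^j G)`. Since
`∫₀¹ s^{k+j} ds = 1/(k+j+1)`, each step of the recursion multiplies both the sup-norm bound of
the `j`-th derivative and its value at `0` by `1/(n+2m+j+1) = 1/(2(m+c))`, where
`c = (n+j+1)/2`, and `Γ(m+1+c) = (m+c) Γ(m+c)` turns the product of these factors into the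
stated Gamma quotient.
-/

open MeasureTheory Set intervalIntegral

theorem hasDerivWithinAt_integral_Ici {E : Type*} [NormedAddCommGroup E] [NormedSpace ℝ E]
    [CompleteSpace E] {Φ : ℝ → E} {a t : ℝ} (hΦ : ContinuousOn Φ (Ici a)) (ht : t ∈ Ici a) :
    HasDerivWithinAt (fun x => ∫ u in a..x, Φ u) (Φ t) (Ici a) t := by
  have : Fact (t ∈ Icc a (t + 1)) := ⟨⟨ht, by linarith⟩⟩
  have hΦ' : ContinuousOn Φ (Icc a (t + 1)) := hΦ.mono Icc_subset_Ici_self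
  have hderiv : HasDerivWithinAt (fun x => ∫ u in a..x, Φ u) (Φ t) (Icc a (t + 1)) t :=
    integral_hasDerivWithinAt_right (hΦ'.mono (Icc_subset_Icc_right (by linarith))
      |>.intervalIntegrable_of_Icc ht)
      (hΦ'.stronglyMeasurableAtFilter_nhdsWithin measurableSet_Icc t) (hΦ' t this.out)
  exact hderiv.mono_of_mem_nhdsWithin (inter_mem_nhdsWithin (Ici a) (Iic_mem_nhds (lt_add_one t)))

theorem Gamma_div_two_pow_mul_Gamma_succ_add {c : ℝ} (m : ℕ) (hc : (m:ℝ) + c ≠ 0) :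
    Real.Gamma c / (2 ^ (m + 1) * Real.Gamma (((m + 1 : ℕ) : ℝ) + c))
      = Real.Gamma c / (2 ^ m * Real.Gamma ((m:ℝ) + c)) / (2 * ((m:ℝ) + c)) := by
  rw [Nat.cast_succ, add_right_comm, Real.Gamma_add_one hc, pow_succ, div_div]
  congr 1
  ring

noncomputable def dilationIntegral (k : ℕ) (G : ℝ → ℂ) (t : ℝ) : ℂ :=
  ∫ s in (0:ℝ)..1, (s:ℂ) ^ k * G (s * t)

theorem dilationIntegral_eqOn_of_eqOn {G H : ℝ → ℂ} (h : EqOn G H (Ici 0)) (k : ℕ) :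
    EqOn (dilationIntegral k G) (dilationIntegral k H) (Ici 0) := fun t ht =>
  integral_congr fun s hs => by
    rw [uIcc_of_le zero_le_one] at hs
    simp only [h (mul_nonneg hs.1 ht)]

theorem continuousOn_dilationIntegral {G : ℝ → ℂ} (hG : ContinuousOn G (Ici 0)) (k : ℕ) :
    ContinuousOn (dilationIntegral k G) (Ici 0) := by
  -- Extending `G` by `G 0` to the left makes the integrand jointly continuous on `ℝ × ℝ`.
  have hext : Continuous fun y => G (max y 0) :=
    hG.comp_continuous (continuous_id.max continuous_const) fun y => le_max_right y 0
  have hG' : EqOn G (fun y => G (max y 0)) (Ici 0) := fun y hy => by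
    simp only [max_eq_left (show (0:ℝ) ≤ y from hy)]
  refine ContinuousOn.congr ?_ (dilationIntegral_eqOn_of_eqOn hG' k)
  exact (continuous_parametric_intervalIntegral_of_continuous'
    (((Complex.continuous_ofReal.comp continuous_snd).pow k).mul
      (hext.comp (continuous_snd.mul continuous_fst))) 0 1).continuousOn

theorem integral_pow_succ_mul_derivWithin_comp {G : ℝ → ℂ} (hG : ContDiffOn ℝ 1 G (Ici 0))
    (k : ℕ) {s x : ℝ} (hs : 0 ≤ s) (hx : 0 ≤ x) :
    ∫ u in (0:ℝ)..x, (s:ℂ) ^ (k + 1) * derivWithin G (Ici 0) (s * u)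
      = (s:ℂ) ^ k * G (s * x) - (s:ℂ) ^ k * G (s * 0) := by
  have hmaps : MapsTo (fun u => s * u) (Ici 0) (Ici 0) := fun u hu => mul_nonneg hs hu
  have hGs : ContDiffOn ℝ 1 (fun u => G (s * u)) (Ici 0) :=
    hG.comp (contDiff_const.mul contDiff_id).contDiffOn hmaps
  have hderiv : ∀ u ∈ Ici (0:ℝ), HasDerivWithinAt (fun u => (s:ℂ) ^ k * G (s * u))
      ((s:ℂ) ^ (k + 1) * derivWithin G (Ici 0) (s * u)) (Ici 0) u := by
    intro u hu
    have hGd := ((hG.differentiableOn one_ne_zero) _ (hmaps hu)).hasDerivWithinAt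
    have := (hGd.scomp u (hasDerivAt_const_mul s).hasDerivWithinAt hmaps).const_mul ((s:ℂ) ^ k)
    rwa [Complex.real_smul, ← mul_assoc, ← pow_succ] at this
  have hgc : ContinuousOn (derivWithin G (Ici 0)) (Ici 0) :=
    hG.continuousOn_derivWithin (uniqueDiffOn_Ici 0) le_rfl
  refine integral_eq_sub_of_hasDeriv_right_of_le hx
    ((continuousOn_const.mul hGs.continuousOn).mono Icc_subset_Ici_self)
    (fun u hu => (hderiv u (le_of_lt hu.1)).mono (Ioi_subset_Ici hu.1.le)) ?_
  refine ContinuousOn.intervalIntegrable_of_Icc hx ?_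
  exact (continuousOn_const.mul (hgc.comp (continuous_const.mul continuous_id).continuousOn
    hmaps)).mono Icc_subset_Ici_self

theorem integral_dilationIntegral_derivWithin {G : ℝ → ℂ} (hG : ContDiffOn ℝ 1 G (Ici 0))
    (k : ℕ) {x : ℝ} (hx : 0 ≤ x) :
    ∫ u in (0:ℝ)..x, dilationIntegral (k + 1) (derivWithin G (Ici 0)) u
      = dilationIntegral k G x - dilationIntegral k G 0 := by
  have hgc : ContinuousOn (derivWithin G (Ici 0)) (Ici 0) :=
    hG.continuousOn_derivWithin (uniqueDiffOn_Ici 0) le_rfl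
  have hint : ∀ y, 0 ≤ y → IntervalIntegrable (fun s : ℝ => (s:ℂ) ^ k * G (s * y)) volume 0 1 :=
    fun y hy => ContinuousOn.intervalIntegrable_of_Icc zero_le_one
      ((Complex.continuous_ofReal.pow k).continuousOn.mul (hG.continuousOn.comp
        (continuous_id.mul continuous_const).continuousOn fun s hs => mul_nonneg hs.1 hy))
  unfold dilationIntegral
  rw [intervalIntegral_intervalIntegral_swap, ← integral_sub (hint x hx) (hint 0 le_rfl)]
  · refine integral_congr fun s hs => ?_
    rw [uIcc_of_le zero_le_one] at hs
    exact integral_pow_succ_mul_derivWithin_comp hG k hs.1 hx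
  · refine ContinuousOn.integrableOn_compact (isCompact_Icc.prod isCompact_Icc) ?_
      |>.mono_set (prod_mono (uIoc_of_le hx ▸ Ioc_subset_Icc_self)
        (uIoc_of_le (zero_le_one (α := ℝ)) ▸ Ioc_subset_Icc_self))
    exact ((Complex.continuous_ofReal.comp continuous_snd).pow _).continuousOn.mul
      (hgc.comp (continuous_snd.mul continuous_fst).continuousOn
        fun p hp => mul_nonneg hp.2.1 hp.1.1)

theorem hasDerivWithinAt_dilationIntegral {G : ℝ → ℂ} (hG : ContDiffOn ℝ 1 G (Ici 0)) (k : ℕ)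
    {t : ℝ} (ht : t ∈ Ici (0:ℝ)) :
    HasDerivWithinAt (dilationIntegral k G)
      (dilationIntegral (k + 1) (derivWithin G (Ici 0)) t) (Ici 0) t := by
  have hprimitive : ∀ x ∈ Ici (0:ℝ), dilationIntegral k G x = dilationIntegral k G 0
      + ∫ u in (0:ℝ)..x, dilationIntegral (k + 1) (derivWithin G (Ici 0)) u :=
    fun x hx => by rw [integral_dilationIntegral_derivWithin hG k hx, add_sub_cancel]
  have hgc : ContinuousOn (derivWithin G (Ici 0)) (Ici 0) :=
    hG.continuousOn_derivWithin (uniqueDiffOn_Ici 0) le_rfl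
  exact ((hasDerivWithinAt_integral_Ici (continuousOn_dilationIntegral hgc (k + 1)) ht).const_add
    _).congr hprimitive (hprimitive t ht)

theorem derivWithin_dilationIntegral {G : ℝ → ℂ} (hG : ContDiffOn ℝ 1 G (Ici 0)) (k : ℕ) :
    EqOn (derivWithin (dilationIntegral k G) (Ici 0))
      (dilationIntegral (k + 1) (derivWithin G (Ici 0))) (Ici 0) := fun t ht =>
  (hasDerivWithinAt_dilationIntegral hG k ht).derivWithin (uniqueDiffOn_Ici 0 t ht)

theorem contDiffOn_dilationIntegral {j : ℕ} {G : ℝ → ℂ} (hG : ContDiffOn ℝ j G (Ici 0))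
    (k : ℕ) : ContDiffOn ℝ j (dilationIntegral k G) (Ici 0) := by
  induction j generalizing k G with
  | zero =>
    simp only [CharP.cast_eq_zero, contDiffOn_zero] at hG ⊢
    exact continuousOn_dilationIntegral hG k
  | succ j ih =>
    have hG1 : ContDiffOn ℝ 1 G (Ici 0) := hG.of_le (by exact_mod_cast j.succ_pos)
    rw [Nat.cast_succ, contDiffOn_succ_iff_derivWithin (uniqueDiffOn_Ici 0)] at hG ⊢
    refine ⟨fun t ht => (hasDerivWithinAt_dilationIntegral hG1 k ht).differentiableWithinAt,
      by simp, (ih hG.2.2 (k + 1)).congr (derivWithin_dilationIntegral hG1 k)⟩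

theorem iteratedDerivWithin_dilationIntegral {j : ℕ} {G : ℝ → ℂ}
    (hG : ContDiffOn ℝ j G (Ici 0)) (k : ℕ) :
    EqOn (iteratedDerivWithin j (dilationIntegral k G) (Ici 0))
      (dilationIntegral (k + j) (iteratedDerivWithin j G (Ici 0))) (Ici 0) := by
  induction j generalizing k G with
  | zero => intro t _; simp
  | succ j ih =>
    have hG1 : ContDiffOn ℝ 1 G (Ici 0) := hG.of_le (by exact_mod_cast j.succ_pos)
    have hg : ContDiffOn ℝ j (derivWithin G (Ici 0)) (Ici 0) :=
      hG.derivWithin (uniqueDiffOn_Ici 0) (by norm_cast)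
    intro t ht
    rw [iteratedDerivWithin_succ',
      iteratedDerivWithin_congr (derivWithin_dilationIntegral hG1 k) ht, ih hg (k + 1) ht,
      iteratedDerivWithin_succ', add_right_comm, add_assoc]

theorem norm_dilationIntegral_le {G : ℝ → ℂ} {B : ℝ} (hB : ∀ t ∈ Ici (0:ℝ), ‖G t‖ ≤ B) (k : ℕ)
    {t : ℝ} (ht : t ∈ Ici (0:ℝ)) : ‖dilationIntegral k G t‖ ≤ B / (k + 1) := by
  have hpointwise : ∀ s ∈ Ioc (0:ℝ) 1, ‖(s:ℂ) ^ k * G (s * t)‖ ≤ s ^ k * B := fun s hs => by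
    rw [norm_mul, norm_pow, Complex.norm_real, Real.norm_of_nonneg hs.1.le]
    exact mul_le_mul_of_nonneg_left (hB _ (mul_nonneg hs.1.le ht)) (pow_nonneg hs.1.le k)
  calc ‖dilationIntegral k G t‖ ≤ ∫ s in (0:ℝ)..1, s ^ k * B :=
        intervalIntegral.norm_integral_le_of_norm_le zero_le_one (ae_of_all _ hpointwise)
          ((continuous_pow k).mul continuous_const |>.intervalIntegrable 0 1)
    _ = B / (k + 1) := by
        rw [intervalIntegral.integral_mul_const, integral_pow]
        ring

theorem dilationIntegral_apply_zero (G : ℝ → ℂ) (k : ℕ) :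
    dilationIntegral k G 0 = G 0 / (k + 1) := by
  have hpow : ∫ s in (0:ℝ)..1, (s:ℂ) ^ k = 1 / (k + 1) := by
    simp_rw [← Complex.ofReal_pow, intervalIntegral.integral_ofReal, integral_pow]
    push_cast
    ring
  simp only [dilationIntegral, mul_zero, intervalIntegral.integral_mul_const, hpow]
  ring

theorem Frec_succ (F : ℝ → ℂ) (n m : ℕ) :
    Frec F n (m + 1) = -dilationIntegral (n + 2 * m) (Frec F n m) := rfl

theorem iteratedDerivWithin_Frec_succ {F : ℝ → ℂ} {n m j : ℕ}
    (hF : ContDiffOn ℝ j (Frec F n m) (Ici 0)) :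
    EqOn (iteratedDerivWithin j (Frec F n (m + 1)) (Ici 0))
      (-dilationIntegral (n + 2 * m + j) (iteratedDerivWithin j (Frec F n m) (Ici 0)))
      (Ici 0) := fun t ht => by
  rw [Frec_succ, iteratedDerivWithin_neg, iteratedDerivWithin_dilationIntegral hF _ ht,
    Pi.neg_apply]

theorem Frec_deriv_bounds (F : ℝ → ℂ) (n m j : ℕ) (M : ℝ)
    (hF : ContDiffOn ℝ j F (Set.Ici 0))
    (hFb : ∀ t ∈ Set.Ici (0:ℝ), ‖iteratedDerivWithin j F (Set.Ici 0) t‖ ≤ M) :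
    ContDiffOn ℝ j (Frec F n m) (Set.Ici 0) ∧
    (∀ t ∈ Set.Ici (0:ℝ), ‖iteratedDerivWithin j (Frec F n m) (Set.Ici 0) t‖
        ≤ (Real.Gamma (((n:ℝ)+j+1)/2)
            / (2^m * Real.Gamma ((m:ℝ) + ((n:ℝ)+j+1)/2))) * M) ∧
    iteratedDerivWithin j (Frec F n m) (Set.Ici 0) 0
      = (((-1:ℝ)^m * Real.Gamma (((n:ℝ)+j+1)/2)
            / (2^m * Real.Gamma ((m:ℝ) + ((n:ℝ)+j+1)/2)) : ℝ) : ℂ)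
        * iteratedDerivWithin j F (Set.Ici 0) 0 := by
  set c : ℝ := ((n:ℝ) + j + 1) / 2 with hc
  induction m with
  | zero =>
    have hratio : Real.Gamma c / (2 ^ 0 * Real.Gamma (((0:ℕ):ℝ) + c)) = 1 := by
      simp [(Real.Gamma_pos_of_pos (by positivity : 0 < c)).ne']
    refine ⟨hF, fun t ht => ?_, ?_⟩
    · rw [hratio, one_mul]
      exact hFb t ht
    · rw [mul_div_assoc, hratio, pow_zero, one_mul, Complex.ofReal_one, one_mul]
      rfl
  | succ m ih =>
    obtain ⟨hC, hbound, hzero⟩ := ih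
    have hk : ((n + 2 * m + j : ℕ) : ℝ) + 1 = 2 * ((m:ℝ) + c) := by push_cast [hc]; ring
    have hratio := Gamma_div_two_pow_mul_Gamma_succ_add m (c := c) (by positivity)
    refine ⟨(contDiffOn_dilationIntegral hC _).neg, fun t ht => ?_, ?_⟩
    · rw [iteratedDerivWithin_Frec_succ hC ht, Pi.neg_apply, norm_neg, hratio, ← hk,
        div_mul_eq_mul_div]
      exact norm_dilationIntegral_le hbound _ ht
    · rw [iteratedDerivWithin_Frec_succ hC self_mem_Ici, Pi.neg_apply,
        dilationIntegral_apply_zero, hzero, mul_div_assoc ((-1:ℝ) ^ (m + 1)), hratio,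
        show ((n + 2 * m + j : ℕ) : ℂ) + 1 = ((2 * ((m:ℝ) + c) : ℝ) : ℂ) by exact_mod_cast hk]
      push_cast
      ring
end

section
/- Let cos(x) = ∑_{j=0}^{m−1} (−1)^j x^{2j}/(2j)! + (−1)^m r_{2m}(x²) x^{2m} define r_{2m} : ℝ≥0 → ℝ. Then r_{2m}(s) ≥ 0 for all s ≥ 0, r_{2m}(0) = 1/(2m)!, and sup_{s≥0} r_{2m}(s) ≤ 1/(2m)!. -/
/-!
The signed Taylor remainders `cosRem m` and `sinRem m` vanish at `0`, and
`(cosRem (m+1))' = sinRem m`, `(sinRem m)' = cosRem m`; so nonnegativity on `[0, ∞)`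
propagates upwards from `cosRem 1 = 1 - cos`. The recurrence
`cosRem (m+1) x = x^(2m)/(2m)! - cosRem m x` turns `cosRem (m+1) ≥ 0` and `cosRem (m+2) ≥ 0`
into the squeeze `1/(2m)! - s/(2m+2)! ≤ cosRem m √s / s^m ≤ 1/(2m)!`, and `r s` is this
quotient for `s > 0`; continuity gives the value at `0`.
-/

open Finset Real

namespace CosTaylor

noncomputable def cosTaylor (m : ℕ) (x : ℝ) : ℝ :=
  ∑ j ∈ range m, (-1 : ℝ) ^ j * x ^ (2 * j) / ((2 * j).factorial : ℝ)

noncomputable def sinTaylor (m : ℕ) (x : ℝ) : ℝ :=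
  ∑ j ∈ range m, (-1 : ℝ) ^ j * x ^ (2 * j + 1) / ((2 * j + 1).factorial : ℝ)

noncomputable def cosRem (m : ℕ) (x : ℝ) : ℝ := (-1 : ℝ) ^ m * (cos x - cosTaylor m x)

noncomputable def sinRem (m : ℕ) (x : ℝ) : ℝ := (-1 : ℝ) ^ m * (sin x - sinTaylor m x)

theorem cosTaylor_succ (m : ℕ) :
    cosTaylor (m + 1) = fun x ↦
      cosTaylor m x + (-1 : ℝ) ^ m * (x ^ (2 * m) / (2 * m).factorial) := by
  ext x; simp only [cosTaylor, sum_range_succ, mul_div_assoc]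

theorem sinTaylor_succ (m : ℕ) :
    sinTaylor (m + 1) = fun x ↦
      sinTaylor m x + (-1 : ℝ) ^ m * (x ^ (2 * m + 1) / (2 * m + 1).factorial) := by
  ext x; simp only [sinTaylor, sum_range_succ, mul_div_assoc]

theorem hasDerivAt_pow_succ_div_factorial {𝕜 : Type*} [NontriviallyNormedField 𝕜] [CharZero 𝕜]
    (n : ℕ) (x : 𝕜) :
    HasDerivAt (fun y : 𝕜 ↦ y ^ (n + 1) / ((n + 1).factorial : 𝕜)) (x ^ n / n.factorial) x := by
  refine ((hasDerivAt_pow (n + 1) x).div_const _).congr_deriv ?_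
  rw [Nat.factorial_succ, Nat.cast_mul, Nat.add_sub_cancel,
    mul_div_mul_left _ _ (Nat.cast_ne_zero.2 n.succ_ne_zero)]

theorem hasDerivAt_sinTaylor (m : ℕ) (x : ℝ) : HasDerivAt (sinTaylor m) (cosTaylor m x) x := by
  induction m with
  | zero =>
    rw [show sinTaylor 0 = fun _ ↦ 0 by ext; simp [sinTaylor]]
    simpa [cosTaylor] using hasDerivAt_const x (0 : ℝ)
  | succ m ih =>
    rw [sinTaylor_succ, cosTaylor_succ]
    exact ih.add ((hasDerivAt_pow_succ_div_factorial (2 * m) x).const_mul _)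

theorem hasDerivAt_cosTaylor_succ (m : ℕ) (x : ℝ) :
    HasDerivAt (cosTaylor (m + 1)) (-sinTaylor m x) x := by
  induction m with
  | zero =>
    rw [show cosTaylor 1 = fun _ ↦ 1 by ext; simp [cosTaylor]]
    simpa [sinTaylor] using hasDerivAt_const x (1 : ℝ)
  | succ m ih =>
    rw [cosTaylor_succ, sinTaylor_succ, show 2 * (m + 1) = 2 * m + 1 + 1 by ring]
    exact (ih.add ((hasDerivAt_pow_succ_div_factorial (2 * m + 1) x).const_mul
      ((-1 : ℝ) ^ (m + 1)))).congr_deriv (by ring)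

theorem hasDerivAt_sinRem (m : ℕ) (x : ℝ) : HasDerivAt (sinRem m) (cosRem m x) x :=
  ((hasDerivAt_sin x).sub (hasDerivAt_sinTaylor m x)).const_mul _

theorem hasDerivAt_cosRem_succ (m : ℕ) (x : ℝ) :
    HasDerivAt (cosRem (m + 1)) (sinRem m x) x :=
  (((hasDerivAt_cos x).sub (hasDerivAt_cosTaylor_succ m x)).const_mul _).congr_deriv <| by
    simp only [sinRem, pow_succ]; ring

theorem sinRem_zero (m : ℕ) : sinRem m 0 = 0 := by
  simp [sinRem, sinTaylor]

theorem cosRem_succ_zero (m : ℕ) : cosRem (m + 1) 0 = 0 := by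
  simp [cosRem, cosTaylor, sum_range_succ']

theorem neg_one_pow_mul_self {R : Type*} [Monoid R] [HasDistribNeg R] (m : ℕ) :
    (-1 : R) ^ m * (-1) ^ m = 1 := by
  rw [← pow_add, ← two_mul, pow_mul, neg_one_sq, one_pow]

theorem cosRem_succ (m : ℕ) (x : ℝ) :
    cosRem (m + 1) x = x ^ (2 * m) / (2 * m).factorial - cosRem m x := by
  simp only [cosRem, cosTaylor_succ, pow_succ]
  linear_combination (x ^ (2 * m) / (2 * m).factorial) * neg_one_pow_mul_self (R := ℝ) m

theorem cosRem_eq_of_cos_eq {m : ℕ} {x c : ℝ} (h : cos x = cosTaylor m x + (-1) ^ m * c) :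
    cosRem m x = c := by
  rw [cosRem, h]
  linear_combination c * neg_one_pow_mul_self (R := ℝ) m

theorem nonneg_of_hasDerivAt_nonneg {f f' : ℝ → ℝ} (hf : ∀ x, HasDerivAt f (f' x) x)
    (hf₀ : f 0 = 0) (hf' : ∀ x, 0 ≤ x → 0 ≤ f' x) {x : ℝ} (hx : 0 ≤ x) : 0 ≤ f x := by
  have hmono : MonotoneOn f (Set.Ici 0) := by
    refine monotoneOn_of_hasDerivWithinAt_nonneg (convex_Ici 0)
      (fun y _ ↦ (hf y).continuousAt.continuousWithinAt) (fun y _ ↦ (hf y).hasDerivWithinAt)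
      fun y hy ↦ hf' y ?_
    rw [interior_Ici] at hy
    exact hy.le
  simpa [hf₀] using hmono Set.self_mem_Ici hx hx

theorem sinRem_nonneg {m : ℕ} (hcos : ∀ x, 0 ≤ x → 0 ≤ cosRem m x) {x : ℝ} (hx : 0 ≤ x) :
    0 ≤ sinRem m x :=
  nonneg_of_hasDerivAt_nonneg (hasDerivAt_sinRem m) (sinRem_zero m) hcos hx

theorem cosRem_nonneg {m : ℕ} (hm : 1 ≤ m) {x : ℝ} (hx : 0 ≤ x) : 0 ≤ cosRem m x := by
  induction m, hm using Nat.le_induction generalizing x with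
  | base => simpa [cosRem, cosTaylor] using cos_le_one x
  | succ m _ ih =>
    exact nonneg_of_hasDerivAt_nonneg (hasDerivAt_cosRem_succ m) (cosRem_succ_zero m)
      (fun y hy ↦ sinRem_nonneg (fun z hz ↦ ih hz) hy) hx

theorem cosRem_le (m : ℕ) {x : ℝ} (hx : 0 ≤ x) :
    cosRem m x ≤ x ^ (2 * m) / (2 * m).factorial := by
  have := cosRem_nonneg (Nat.le_add_left 1 m) hx
  rw [cosRem_succ] at this
  linarith

theorem le_cosRem (m : ℕ) {x : ℝ} (hx : 0 ≤ x) :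
    x ^ (2 * m) / (2 * m).factorial - x ^ (2 * m + 2) / (2 * m + 2).factorial ≤ cosRem m x := by
  have := cosRem_le (m + 1) hx
  rw [cosRem_succ, show 2 * (m + 1) = 2 * m + 2 by ring] at this
  linarith

theorem sqrt_pow_two_mul {s : ℝ} (hs : 0 ≤ s) (m : ℕ) : √s ^ (2 * m) = s ^ m := by
  rw [pow_mul, sq_sqrt hs]

theorem cosRem_sqrt_div_le (m : ℕ) {s : ℝ} (hs : 0 < s) :
    cosRem m √s / s ^ m ≤ 1 / (2 * m).factorial := by
  rw [div_le_iff₀ (by positivity), one_div_mul_eq_div, ← sqrt_pow_two_mul hs.le]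
  exact cosRem_le m (sqrt_nonneg s)

theorem le_cosRem_sqrt_div (m : ℕ) {s : ℝ} (hs : 0 < s) :
    1 / (2 * m).factorial - s / (2 * m + 2).factorial ≤ cosRem m √s / s ^ m := by
  rw [le_div_iff₀ (by positivity), sub_mul, one_div_mul_eq_div, div_mul_eq_mul_div, ← pow_succ',
    ← sqrt_pow_two_mul hs.le, ← sqrt_pow_two_mul hs.le, mul_add_one]
  exact le_cosRem m (sqrt_nonneg s)

end CosTaylor

open CosTaylor in
theorem cos_taylor_remainder (m : ℕ) (hm : 1 ≤ m) (r : ℝ → ℝ)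
    (hrc : ContinuousOn r (Set.Ici 0))
    (hr : ∀ x : ℝ, Real.cos x
      = (∑ j ∈ Finset.range m, (-1:ℝ)^j * x^(2*j) / ((2*j).factorial : ℝ))
        + (-1:ℝ)^m * r (x^2) * x^(2*m)) :
    (∀ s ≥ (0:ℝ), 0 ≤ r s) ∧ r 0 = 1 / ((2*m).factorial : ℝ) ∧
    (∀ s ≥ (0:ℝ), r s ≤ 1 / ((2*m).factorial : ℝ)) := by
  have hr_eq : ∀ s > 0, r s = cosRem m √s / s ^ m := fun s hs ↦ by
    rw [eq_div_iff (by positivity), ← sqrt_pow_two_mul hs.le]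
    refine (cosRem_eq_of_cos_eq ?_).symm
    rw [hr, sq_sqrt hs.le, mul_assoc, cosTaylor]
  have hle : ∀ s ∈ Set.Ioi 0, r s ≤ 1 / (2 * m).factorial := fun s hs ↦
    hr_eq s hs ▸ cosRem_sqrt_div_le m hs
  have hge : ∀ s ∈ Set.Ioi 0, 1 / (2 * m).factorial - s / (2 * m + 2).factorial ≤ r s :=
    fun s hs ↦ hr_eq s hs ▸ le_cosRem_sqrt_div m hs
  have hr0 : r 0 = 1 / (2 * m).factorial := by
    have hcont : ContinuousWithinAt r (Set.Ioi 0) 0 :=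
      (hrc 0 Set.self_mem_Ici).mono Set.Ioi_subset_Ici_self
    have hcl : (0 : ℝ) ∈ closure (Set.Ioi 0) := by simp
    refine le_antisymm (hcont.closure_le hcl continuousWithinAt_const hle) ?_
    simpa using (continuousWithinAt_const.sub (continuousWithinAt_id.div_const _)).closure_le
      hcl hcont hge
  refine ⟨fun s hs ↦ ?_, hr0, fun s hs ↦ ?_⟩
  · rcases hs.eq_or_lt with rfl | hs
    · rw [hr0]; positivity
    · rw [hr_eq s hs]; exact div_nonneg (cosRem_nonneg hm (sqrt_nonneg s)) (by positivity)
  · rcases hs.eq_or_lt with rfl | hs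
    · exact hr0.le
    · exact hle s hs
end
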